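/- arXiv:2405.14248 — 5 statements merged into one kernel-verified Lean document; each statement's English description precedes it below -/
import Mathlib

section
/- For real α > β > 0, the integral over x from 0 to ∞ of (√(√(x²+α²)+α)/√(x²+α²))·cos(2αβx)·e^{-(α²−β²)√(x²+α²)} equals √π · α/(α²+β²) · e^{-α(α²+β²)}. -/
open Real MeasureTheory Set Filter

-- assume helpers from b.lean exist; restate minimal ones needed
lemma mul_exp_neg_le_one {t : ℝ} (ht : 0 ≤ t) : t * Real.exp (-t) ≤ 1 := by
  have h1 : Real.exp (-t) * Real.exp t = 1 := by rw [← Real.exp_add]; simp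
  nlinarith [Real.add_one_le_exp t, Real.exp_pos (-t)]

lemma inv_sq_mul_exp_le {δ u : ℝ} (hδ : 0 < δ) (hu : 0 < u) :
    (1/u^2) * Real.exp (-δ/u^2) ≤ 1/δ := by
  have h := mul_exp_neg_le_one (t := δ/u^2) (by positivity)
  have hu2 : (0:ℝ) < u^2 := by positivity
  rw [show -δ/u^2 = -(δ/u^2) by ring]
  have e : 1/u^2 * Real.exp (-(δ/u^2)) = (1/δ) * (δ/u^2 * Real.exp (-(δ/u^2))) := by
    field_simp
  rw [e]
  calc (1/δ) * (δ/u^2 * Real.exp (-(δ/u^2))) ≤ (1/δ) * 1 :=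
        mul_le_mul_of_nonneg_left h (by positivity)
    _ = 1/δ := mul_one _

lemma integrableOn_rexp_aux {b d : ℝ} (hb : 0 < b) (hd : 0 ≤ d) :
    IntegrableOn (fun u : ℝ => Real.exp (-(b*u^2 + d/u^2)/2)) (Ioi 0) := by
  refine Integrable.mono' ((integrable_exp_neg_mul_sq (b := b/2) (half_pos hb)).restrict) ?_ ?_
  · apply ContinuousOn.aestronglyMeasurable _ measurableSet_Ioi
    apply Real.continuous_exp.comp_continuousOn
    apply ContinuousOn.div_const
    apply ContinuousOn.neg
    exact ((continuous_const.mul (continuous_pow 2)).continuousOn).add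
      (continuousOn_const.div (continuous_pow 2).continuousOn
        (fun u hu => pow_ne_zero 2 (ne_of_gt hu)))
  · filter_upwards [ae_restrict_mem measurableSet_Ioi] with u hu
    rw [Real.norm_eq_abs, Real.abs_exp]
    apply Real.exp_le_exp.2
    have hu0 : (0:ℝ) < u := hu
    have h1 : (0:ℝ) < u^2 := by positivity
    have : 0 ≤ d/u^2 := by positivity
    nlinarith

lemma integrableOn_inv_sq_rexp_aux {b d : ℝ} (hb : 0 < b) (hd : 0 < d) :
    IntegrableOn (fun u : ℝ => (1/u^2) * Real.exp (-(b*u^2 + d/u^2)/2)) (Ioi 0) := by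
  refine Integrable.mono'
    (((integrable_exp_neg_mul_sq (b := b/2) (half_pos hb)).const_mul (2/d)).restrict) ?_ ?_
  · apply ContinuousOn.aestronglyMeasurable _ measurableSet_Ioi
    refine ContinuousOn.mul (continuousOn_const.div (continuous_pow 2).continuousOn
      (fun u hu => pow_ne_zero 2 (ne_of_gt hu))) ?_
    apply Real.continuous_exp.comp_continuousOn
    apply ContinuousOn.div_const
    apply ContinuousOn.neg
    exact ((continuous_const.mul (continuous_pow 2)).continuousOn).add
      (continuousOn_const.div (continuous_pow 2).continuousOn
        (fun u hu => pow_ne_zero 2 (ne_of_gt hu)))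
  · filter_upwards [ae_restrict_mem measurableSet_Ioi] with u hu
    have hu0 : (0:ℝ) < u := hu
    have h1 : (0:ℝ) < u^2 := by positivity
    rw [Real.norm_eq_abs, abs_mul, Real.abs_exp, abs_of_pos (by positivity : (0:ℝ) < 1/u^2)]
    have key : (1/u^2) * Real.exp (-(d/2)/u^2) ≤ 1/(d/2) := inv_sq_mul_exp_le (half_pos hd) hu0
    have hsplit : Real.exp (-(b*u^2 + d/u^2)/2)
        = Real.exp (-(d/2)/u^2) * Real.exp (-(b/2)*u^2) := by
      rw [← Real.exp_add]; congr 1; field_simp; ring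
    rw [hsplit, ← mul_assoc]
    calc (1/u^2) * Real.exp (-(d/2)/u^2) * Real.exp (-(b/2)*u^2)
        ≤ (1/(d/2)) * Real.exp (-(b/2)*u^2) := by
          apply mul_le_mul_of_nonneg_right key (Real.exp_nonneg _)
      _ = 2/d * Real.exp (-(b/2)*u^2) := by rw [one_div, inv_div]

lemma inv_image {k : ℝ} (hk : 0 < k) : (fun u : ℝ => k/u) '' (Ioi 0) = Ioi 0 := by
  ext x
  simp only [mem_image, mem_Ioi]
  constructor
  · rintro ⟨u, hu, rfl⟩; positivity
  · intro hx; exact ⟨k/x, by positivity, by field_simp⟩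

lemma cov_inv {k : ℝ} (hk : 0 < k) (f : ℝ → ℝ) :
    ∫ u in Ioi (0:ℝ), f u = ∫ u in Ioi (0:ℝ), (k/u^2) * f (k/u) := by
  have hderiv : ∀ u ∈ Ioi (0:ℝ), HasDerivWithinAt (fun u : ℝ => k/u) (-(k/u^2)) (Ioi 0) u := by
    intro u hu
    have hu0 : u ≠ 0 := ne_of_gt hu
    have : HasDerivAt (fun u : ℝ => k/u) (-(k/u^2)) u := by
      simpa [div_eq_mul_inv, pow_two] using
        ((hasDerivAt_inv hu0).const_mul k)
    exact this.hasDerivWithinAt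
  have hinj : InjOn (fun u : ℝ => k/u) (Ioi 0) := by
    intro u hu v hv h
    have hu0 : (0:ℝ) < u := hu
    have hv0 : (0:ℝ) < v := hv
    field_simp at h
    exact h.symm
  have := integral_image_eq_integral_abs_deriv_smul measurableSet_Ioi hderiv hinj f
  rw [inv_image hk] at this
  rw [this]
  apply setIntegral_congr_fun measurableSet_Ioi
  intro u hu
  have hu0 : (0:ℝ) < u := hu
  show |(-(k / u ^ 2))| • f (k / u) = k / u ^ 2 * f (k / u)
  rw [smul_eq_mul, abs_neg, abs_of_pos (by positivity)]

lemma lin_image {a c : ℝ} (ha : 0 < a) (hc : 0 < c) :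
    (fun u : ℝ => a*u - c/u) '' (Ioi 0) = univ := by
  ext x
  simp only [mem_image, mem_Ioi, mem_univ, iff_true]
  set s := Real.sqrt (x^2 + 4*a*c) with hs
  have hs2 : s^2 = x^2 + 4*a*c := Real.sq_sqrt (by positivity)
  have hsx : |x| < s := by
    rw [hs, ← Real.sqrt_sq_eq_abs]
    exact Real.sqrt_lt_sqrt (sq_nonneg x) (by nlinarith)
  have hxs : 0 < x + s := by
    rcases abs_lt.mp hsx with ⟨h1, _⟩; linarith
  refine ⟨(x+s)/(2*a), by positivity, ?_⟩
  field_simp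
  nlinarith [hs2]

lemma lin_inj {a c : ℝ} (ha : 0 < a) (hc : 0 < c) :
    InjOn (fun u : ℝ => a*u - c/u) (Ioi 0) := by
  intro u hu v hv h
  simp only at h
  have hu0 : (0:ℝ) < u := hu
  have hv0 : (0:ℝ) < v := hv
  have key : (u - v) * (a*u*v + c) = 0 := by
    field_simp at h
    nlinarith [h]
  rcases mul_eq_zero.mp key with h1 | h2
  · exact sub_eq_zero.mp h1
  · nlinarith [mul_pos (mul_pos ha hu0) hv0]

lemma cov_lin {a c : ℝ} (ha : 0 < a) (hc : 0 < c) (f : ℝ → ℝ) :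
    ∫ v : ℝ, f v = ∫ u in Ioi (0:ℝ), (a + c/u^2) * f (a*u - c/u) := by
  have hderiv : ∀ u ∈ Ioi (0:ℝ), HasDerivWithinAt (fun u : ℝ => a*u - c/u)
      (a + c/u^2) (Ioi 0) u := by
    intro u hu
    have hu0 : u ≠ 0 := ne_of_gt hu
    have h1 : HasDerivAt (fun u : ℝ => a*u - c/u) (a*1 - (c * -(u^2)⁻¹)) u := by
      exact ((hasDerivAt_id u).const_mul a).sub (((hasDerivAt_inv hu0).const_mul c).congr_deriv
        (by rw [pow_two]))
    have : a*1 - (c * -(u^2)⁻¹) = a + c/u^2 := by field_simp; ring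
    rw [this] at h1
    exact h1.hasDerivWithinAt
  have him := lin_image ha hc
  have := integral_image_eq_integral_abs_deriv_smul measurableSet_Ioi hderiv (lin_inj ha hc) f
  rw [him, Measure.restrict_univ] at this
  rw [this]
  apply setIntegral_congr_fun measurableSet_Ioi
  intro u hu
  have hu0 : (0:ℝ) < u := hu
  show |a + c / u ^ 2| • f (a*u - c/u) = (a + c / u ^ 2) * f (a*u - c/u)
  rw [smul_eq_mul, abs_of_pos (by positivity)]

lemma gaussian_half : ∫ v : ℝ, Real.exp (-v^2/2) = Real.sqrt (2*π) := by
  have h := integral_gaussian (1/2)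
  simp_rw [show ∀ x:ℝ, -(1/2:ℝ)*x^2 = -x^2/2 from fun x => by ring] at h
  rw [h]; congr 1; rw [div_div_eq_mul_div, div_one]; ring

lemma glasser_real {a c : ℝ} (ha : 0 < a) (hc : 0 < c) :
    ∫ u in Ioi (0:ℝ), Real.exp (-(a^2*u^2 + c^2/u^2)/2)
      = Real.sqrt (2*π) / (2*a) * Real.exp (-(a*c)) := by
  set E : ℝ → ℝ := fun u => Real.exp (-(a^2*u^2 + c^2/u^2)/2) with hE
  have hIE : IntegrableOn E (Ioi 0) := integrableOn_rexp_aux (by positivity) (by positivity)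
  have hIE2 : IntegrableOn (fun u => (c/a/u^2) * E u) (Ioi 0) := by
    have base : IntegrableOn (fun u : ℝ => (c/a) * ((1/u^2) * Real.exp (-(a^2*u^2 + c^2/u^2)/2)))
        (Ioi 0) := (integrableOn_inv_sq_rexp_aux (b := a^2) (d := c^2)
        (by positivity) (by positivity)).const_mul (c/a)
    exact base.congr_fun (fun u hu => by simp only [hE]; ring) measurableSet_Ioi
  -- symmetry: ∫ E = ∫ (k/u²) E
  have hsym : ∫ u in Ioi (0:ℝ), E u = ∫ u in Ioi (0:ℝ), (c/a/u^2) * E u := by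
    have hk : (0:ℝ) < c/a := by positivity
    rw [cov_inv hk E]
    apply setIntegral_congr_fun measurableSet_Ioi
    intro u hu
    have hu0 : (0:ℝ) < u := hu
    have harg : E (c/a/u) = E u := by
      simp only [hE]
      congr 1
      field_simp
      ring
    show c/a/u^2 * E (c/a/u) = c/a/u^2 * E u
    rw [harg]
  -- gaussian via cov_lin
  have hgauss : Real.sqrt (2*π) = ∫ u in Ioi (0:ℝ), (a + c/u^2) * Real.exp (-(a*u - c/u)^2/2) := by
    rw [← gaussian_half, cov_lin ha hc (fun v => Real.exp (-v^2/2))]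
  have hpt : ∀ u ∈ Ioi (0:ℝ), (a + c/u^2) * Real.exp (-(a*u - c/u)^2/2)
      = Real.exp (a*c) * (a * E u + a * ((c/a/u^2) * E u)) := by
    intro u hu
    have hu0 : (0:ℝ) < u := hu
    have hexp : Real.exp (-(a*u - c/u)^2/2) = Real.exp (a*c) * E u := by
      rw [hE, ← Real.exp_add]
      congr 1
      field_simp
      ring
    rw [hexp]
    field_simp
  have hsplit : ∫ u in Ioi (0:ℝ), (a + c/u^2) * Real.exp (-(a*u - c/u)^2/2)
      = Real.exp (a*c) * (a * (∫ u in Ioi (0:ℝ), E u) + a * (∫ u in Ioi (0:ℝ), (c/a/u^2) * E u)) := by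
    rw [setIntegral_congr_fun measurableSet_Ioi hpt]
    rw [integral_const_mul]
    congr 1
    rw [integral_add (hIE.const_mul a) (hIE2.const_mul a), integral_const_mul, integral_const_mul]
  rw [hsplit, ← hsym] at hgauss
  have h2 : Real.sqrt (2*π) = Real.exp (a*c) * (2*a) * ∫ u in Ioi (0:ℝ), E u := by
    rw [hgauss]; ring
  rw [eq_comm]
  have h2a : (2*a) ≠ 0 := by positivity
  calc Real.sqrt (2*π)/(2*a) * Real.exp (-(a*c))
      = (Real.exp (a*c) * (2*a) * ∫ u in Ioi (0:ℝ), E u)/(2*a) * Real.exp (-(a*c)) := by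
        rw [← h2]
    _ = (∫ u in Ioi (0:ℝ), E u) * (Real.exp (a*c) * Real.exp (-(a*c))) := by
        field_simp
    _ = ∫ u in Ioi (0:ℝ), E u := by rw [← Real.exp_add]; simp

lemma sector_open' : IsOpen {z : ℂ | |z.im| < z.re} :=
  isOpen_lt (continuous_abs.comp Complex.continuous_im) Complex.continuous_re

lemma sector_re_pos' {z : ℂ} (hz : |z.im| < z.re) : 0 < z.re :=
  lt_of_le_of_lt (abs_nonneg _) hz

lemma sector_sq_re_pos' {z : ℂ} (hz : |z.im| < z.re) : 0 < (z^2).re := by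
  rw [pow_two, Complex.mul_re]
  nlinarith [abs_mul_abs_self z.im, abs_nonneg z.im]

lemma sector_convex' : Convex ℝ {z : ℂ | |z.im| < z.re} := by
  intro z hz w hw s t hs ht hst
  simp only [Set.mem_setOf_eq] at *
  have him : (s • z + t • w).im = s * z.im + t * w.im := by
    simp [Complex.add_im, Complex.real_smul, Complex.mul_im]
  have hre : (s • z + t • w).re = s * z.re + t * w.re := by
    simp [Complex.add_re, Complex.real_smul, Complex.mul_re]
  rw [him, hre, abs_lt]
  have h1 := abs_lt.mp hz
  have h2 := abs_lt.mp hw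
  constructor
  · rcases hs.eq_or_lt with h | h
    · rw [← h]; simp only [zero_mul, neg_add, zero_add, add_zero]
      have : t = 1 := by linarith
      rw [this] at *; nlinarith
    · nlinarith
  · rcases hs.eq_or_lt with h | h
    · rw [← h]; simp only [zero_mul, zero_add, add_zero]
      have : t = 1 := by linarith
      rw [this] at *; nlinarith
    · nlinarith

lemma contOn_cexp' (b d : ℂ) :
    ContinuousOn (fun u : ℝ => Complex.exp (-(b*(u:ℂ)^2 + d/(u:ℂ)^2)/2)) (Ioi 0) := by
  apply Complex.continuous_exp.comp_continuousOn
  apply ContinuousOn.div_const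
  apply ContinuousOn.neg
  apply ContinuousOn.add
  · exact (continuous_const.mul ((Complex.continuous_ofReal.pow 2))).continuousOn
  · exact continuousOn_const.div ((Complex.continuous_ofReal.pow 2)).continuousOn
      (fun u hu => pow_ne_zero 2 (Complex.ofReal_ne_zero.2 (ne_of_gt hu)))

lemma re_aux' (b d : ℂ) {u : ℝ} (hu : u ≠ 0) :
    (-(b*(u:ℂ)^2 + d/(u:ℂ)^2)/2).re = -(b.re*u^2 + d.re/u^2)/2 := by
  have h2 : (u:ℝ)^2 ≠ 0 := pow_ne_zero 2 hu
  have key : -(b*(u:ℂ)^2 + d/(u:ℂ)^2)/2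
      = ((-(u^2)/2 : ℝ):ℂ) * b + ((-(u^2)⁻¹/2 : ℝ):ℂ) * d := by
    push_cast
    field_simp
    ring
  rw [key, Complex.add_re, Complex.re_ofReal_mul, Complex.re_ofReal_mul]
  field_simp
  ring

lemma norm_cexp_aux' (b d : ℂ) {u : ℝ} (hu : u ≠ 0) :
    ‖Complex.exp (-(b*(u:ℂ)^2 + d/(u:ℂ)^2)/2)‖
      = Real.exp (-(b.re*u^2 + d.re/u^2)/2) := by
  rw [Complex.norm_exp, re_aux' b d hu]

lemma integrableOn_cexp_aux' {b d : ℂ} (hb : 0 < b.re) (hd : 0 ≤ d.re) :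
    IntegrableOn (fun u : ℝ => Complex.exp (-(b*(u:ℂ)^2 + d/(u:ℂ)^2)/2)) (Ioi 0) := by
  refine Integrable.mono' ((integrable_exp_neg_mul_sq (b := b.re/2) (half_pos hb)).restrict)
    ((contOn_cexp' b d).aestronglyMeasurable measurableSet_Ioi) ?_
  filter_upwards [ae_restrict_mem measurableSet_Ioi] with u hu
  rw [norm_cexp_aux' b d (ne_of_gt hu)]
  apply Real.exp_le_exp.2
  have hu0 : (0:ℝ) < u := hu
  have h1 : (0:ℝ) < u^2 := by positivity
  have : 0 ≤ d.re/u^2 := by positivity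
  nlinarith

lemma glasser_step1 {c : ℝ} (hc : 0 < c) {z : ℂ} (hz : |z.im| < z.re) :
    ∫ u in Ioi (0:ℝ), Complex.exp (-(z^2*(u:ℂ)^2 + (c:ℂ)^2/(u:ℂ)^2)/2)
      = (Real.sqrt (2*π) : ℂ) / (2*z) * Complex.exp (-(z*(c:ℂ))) := by
  have hcre : (0:ℝ) ≤ (((c:ℂ))^2).re := by
    rw [show ((c:ℂ))^2 = ((c^2:ℝ):ℂ) by push_cast; ring, Complex.ofReal_re]
    positivity
  set f : ℂ → ℂ := fun z => ∫ u in Ioi (0:ℝ),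
    Complex.exp (-(z^2*(u:ℂ)^2 + (c:ℂ)^2/(u:ℂ)^2)/2) with hfdef
  set g : ℂ → ℂ := fun z => (Real.sqrt (2*π) : ℂ) / (2*z) * Complex.exp (-(z*(c:ℂ))) with hgdef
  suffices h : Set.EqOn f g {z : ℂ | |z.im| < z.re} from h hz
  have hdiff : ∀ z₀ ∈ {z : ℂ | |z.im| < z.re}, DifferentiableAt ℂ f z₀ := by
    intro z₀ hz₀
    have hsq : 0 < (z₀^2).re := sector_sq_re_pos' hz₀
    set δ : ℝ := (z₀^2).re/2 with hδdef
    have hδ : 0 < δ := half_pos hsq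
    have hopen : IsOpen {z : ℂ | δ < (z^2).re} :=
      isOpen_lt continuous_const (Complex.continuous_re.comp (continuous_pow 2))
    obtain ⟨ε, hε, hball⟩ := Metric.isOpen_iff.mp hopen z₀ (by
      simp only [Set.mem_setOf_eq, hδdef]; linarith)
    have key := hasDerivAt_integral_of_dominated_loc_of_deriv_le (μ := volume.restrict (Ioi 0))
      (F := fun z u => Complex.exp (-(z^2*(u:ℂ)^2 + (c:ℂ)^2/(u:ℂ)^2)/2))
      (F' := fun z (u : ℝ) => Complex.exp (-(z^2*(u:ℂ)^2 + (c:ℂ)^2/(u:ℂ)^2)/2) * (-(z*(u:ℂ)^2)))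
      (x₀ := z₀) (s := Metric.ball z₀ ε) (Metric.ball_mem_nhds z₀ hε)
      (Eventually.of_forall (fun z =>
        ((contOn_cexp' (z^2) ((c:ℂ)^2)).aestronglyMeasurable measurableSet_Ioi)))
      (integrableOn_cexp_aux' (sector_sq_re_pos' hz₀) hcre)
      (((contOn_cexp' (z₀^2) ((c:ℂ)^2)).mul
        ((continuous_const.mul (Complex.continuous_ofReal.pow 2)).neg.continuousOn)).aestronglyMeasurable
        measurableSet_Ioi)
      (bound := fun u => (‖z₀‖+ε) * (u^2 * Real.exp (-(δ/2) * u^2)))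
      ?_ ?_ ?_
    · exact key.2.differentiableAt
    · -- bound
      filter_upwards [ae_restrict_mem measurableSet_Ioi] with u hu
      intro z hzball
      have hu0 : (0:ℝ) < u := hu
      rw [norm_mul, norm_cexp_aux' (z^2) ((c:ℂ)^2) (ne_of_gt hu0)]
      have h1 : ‖-(z*(u:ℂ)^2)‖ = ‖z‖ * u^2 := by
        rw [norm_neg, norm_mul]
        congr 1
        rw [show ((u:ℂ))^2 = ((u^2:ℝ):ℂ) by push_cast; ring, Complex.norm_real,
          Real.norm_eq_abs, abs_of_pos (by positivity)]
      rw [h1]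
      have hz2 : δ < ((z^2).re) := hball hzball
      have hnz : ‖z‖ ≤ ‖z₀‖ + ε := by
        have := mem_ball_iff_norm.mp hzball
        calc ‖z‖ = ‖z₀ + (z - z₀)‖ := by ring_nf
          _ ≤ ‖z₀‖ + ‖z - z₀‖ := norm_add_le _ _
          _ ≤ ‖z₀‖ + ε := by
              have : ‖z - z₀‖ ≤ ε := le_of_lt this
              linarith
      have hexp : Real.exp (-((z^2).re*u^2 + ((c:ℂ)^2).re/u^2)/2)
          ≤ Real.exp (-(δ/2) * u^2) := by
        apply Real.exp_le_exp.2
        have h3 : 0 ≤ ((c:ℂ)^2).re/u^2 := by positivity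
        nlinarith
      calc Real.exp (-((z^2).re*u^2 + ((c:ℂ)^2).re/u^2)/2) * (‖z‖ * u^2)
          ≤ Real.exp (-(δ/2) * u^2) * ((‖z₀‖+ε) * u^2) := by
            apply mul_le_mul hexp (by nlinarith [sq_nonneg u]) (by positivity)
              (Real.exp_nonneg _)
        _ = (‖z₀‖+ε) * (u^2 * Real.exp (-(δ/2) * u^2)) := by ring
    · -- bound integrable
      apply Integrable.restrict
      apply Integrable.const_mul
      refine Integrable.mono' ((integrable_exp_neg_mul_sq (b := δ/4) (by positivity)).const_mul (4/δ)) ?_ ?_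
      · exact (Continuous.mul (continuous_pow 2)
          (Real.continuous_exp.comp (continuous_const.mul (continuous_pow 2)))).aestronglyMeasurable
      · refine Eventually.of_forall (fun u => ?_)
        rw [Real.norm_eq_abs, abs_mul, Real.abs_exp, abs_of_nonneg (sq_nonneg u)]
        have hs : u^2 * Real.exp (-(δ/4)*u^2) ≤ 4/δ := by
          have := mul_exp_neg_le_one (t := (δ/4)*u^2) (by positivity)
          have e : u^2 * Real.exp (-((δ/4)*u^2)) = (4/δ) * ((δ/4)*u^2 * Real.exp (-((δ/4)*u^2))) := by
            field_simp
          rw [show -(δ/4)*u^2 = -((δ/4)*u^2) by ring, e]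
          calc (4/δ) * ((δ/4)*u^2 * Real.exp (-((δ/4)*u^2))) ≤ (4/δ) * 1 :=
                mul_le_mul_of_nonneg_left this (by positivity)
            _ = 4/δ := mul_one _
        have hsplit : Real.exp (-(δ/2)*u^2) = Real.exp (-(δ/4)*u^2) * Real.exp (-(δ/4)*u^2) := by
          rw [← Real.exp_add]; congr 1; ring
        rw [hsplit, ← mul_assoc]
        exact mul_le_mul_of_nonneg_right (by rw [mul_comm (u^2)] at hs ⊢; linarith [hs])
          (Real.exp_nonneg _)
    · -- differentiability in z
      refine Eventually.of_forall (fun u => fun z hzb => ?_)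
      have hinner : HasDerivAt (fun z : ℂ => -(z^2*(u:ℂ)^2 + (c:ℂ)^2/(u:ℂ)^2)/2)
          (-(z*(u:ℂ)^2)) z := by
        have h1 : HasDerivAt (fun z : ℂ => z^2*(u:ℂ)^2 + (c:ℂ)^2/(u:ℂ)^2)
            ((2*z^1)*(u:ℂ)^2) z := ((hasDerivAt_pow 2 z).mul_const ((u:ℂ)^2)).add_const _
        have h2 : HasDerivAt (fun z : ℂ => -(z^2*(u:ℂ)^2 + (c:ℂ)^2/(u:ℂ)^2)/2) (-((2*z^1)*(u:ℂ)^2)/2) z := (h1.neg).div_const (2:ℂ)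
        convert h2 using 1
        ring
      exact hinner.cexp
  have hfd : DifferentiableOn ℂ f {z : ℂ | |z.im| < z.re} :=
    fun z hzV => (hdiff z hzV).differentiableWithinAt
  have hfa : AnalyticOnNhd ℂ f {z : ℂ | |z.im| < z.re} := hfd.analyticOnNhd sector_open'
  have hga : AnalyticOnNhd ℂ g {z : ℂ | |z.im| < z.re} := by
    refine DifferentiableOn.analyticOnNhd (fun z hzV => DifferentiableAt.differentiableWithinAt ?_)
      sector_open'
    have hz0 : z ≠ 0 := by
      intro h
      have := sector_re_pos' hzV
      rw [h] at this
      simp at this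
    have h2z : (2:ℂ)*z ≠ 0 := mul_ne_zero two_ne_zero hz0
    exact ((differentiableAt_const _).div ((differentiableAt_const (2:ℂ)).mul differentiableAt_id) h2z).mul
      ((differentiableAt_id.mul_const ((c:ℂ))).neg.cexp)
  have hreal : ∀ x : ℝ, 0 < x → f ((x:ℝ):ℂ) = g ((x:ℝ):ℂ) := by
    intro x hx
    have hint : ∀ u : ℝ, u ∈ Ioi (0:ℝ) →
        Complex.exp (-(((x:ℂ))^2*(u:ℂ)^2 + ((c:ℂ))^2/(u:ℂ)^2)/2)
          = ((Real.exp (-(x^2*u^2 + c^2/u^2)/2) : ℝ) : ℂ) := by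
      intro u hu
      rw [Complex.ofReal_exp]
      congr 1
      push_cast
      ring
    rw [hfdef]
    simp only
    rw [setIntegral_congr_fun measurableSet_Ioi hint]
    rw [show ∀ (h : ℝ → ℝ), (∫ u in Ioi (0:ℝ), ((h u : ℝ):ℂ)) = ((∫ u in Ioi (0:ℝ), h u : ℝ):ℂ)
      from fun h => integral_ofReal, glasser_real hx hc]
    rw [hgdef]
    push_cast
    ring
  have hfreq : ∃ᶠ w in nhdsWithin (1:ℂ) {(1:ℂ)}ᶜ, f w = g w := by
    have htend : Tendsto (fun n : ℕ => (((1 + (1/(n+1)) : ℝ)):ℂ)) atTop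
        (nhdsWithin (1:ℂ) {(1:ℂ)}ᶜ) := by
      apply tendsto_nhdsWithin_of_tendsto_nhds_of_eventually_within
      · have hb : Tendsto (fun n : ℕ => (1 + (1/(n+1)) : ℝ)) atTop (nhds 1) := by
          have := tendsto_one_div_add_atTop_nhds_zero_nat (𝕜 := ℝ)
          have h2 := this.const_add (1:ℝ)
          simpa using h2
        have h4 := (Complex.continuous_ofReal.tendsto (1:ℝ)).comp hb
        rw [Complex.ofReal_one] at h4
        exact h4
      · refine Eventually.of_forall (fun n => ?_)
        simp only [Set.mem_compl_iff, Set.mem_singleton_iff]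
        intro h
        have h1 : ((1 + (1/(n+1)) : ℝ):ℂ) = ((1:ℝ):ℂ) := by rw [h]; norm_num
        have h2 : (1 + (1/(n+1)) : ℝ) = 1 := Complex.ofReal_inj.mp h1
        have : (0:ℝ) < 1/((n:ℝ)+1) := by positivity
        linarith
    exact htend.frequently (Frequently.of_forall (fun n => hreal _ (by positivity)))
  exact hfa.eqOn_of_preconnected_of_frequently_eq hga sector_convex'.isPreconnected
    (by simp [Set.mem_setOf_eq] : (1:ℂ) ∈ {z : ℂ | |z.im| < z.re}) hfreq

lemma glasser_key {a : ℂ} (haV : |a.im| < a.re) {w : ℂ} (hwV : |w.im| < w.re) :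
    ∫ u in Ioi (0:ℝ), Complex.exp (-(a^2*(u:ℂ)^2 + w^2/(u:ℂ)^2)/2)
      = (Real.sqrt (2*π) : ℂ) / (2*a) * Complex.exp (-(a*w)) := by
  have ha2 : 0 < (a^2).re := sector_sq_re_pos' haV
  set f : ℂ → ℂ := fun w => ∫ u in Ioi (0:ℝ),
    Complex.exp (-(a^2*(u:ℂ)^2 + w^2/(u:ℂ)^2)/2) with hfdef
  set g : ℂ → ℂ := fun w => (Real.sqrt (2*π) : ℂ) / (2*a) * Complex.exp (-(a*w)) with hgdef
  suffices h : Set.EqOn f g {z : ℂ | |z.im| < z.re} from h hwV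
  have hdiff : ∀ w₀ ∈ {z : ℂ | |z.im| < z.re}, DifferentiableAt ℂ f w₀ := by
    intro w₀ hw₀
    have hsq : 0 < (w₀^2).re := sector_sq_re_pos' hw₀
    set δ : ℝ := (w₀^2).re/2 with hδdef
    have hδ : 0 < δ := half_pos hsq
    have hopen : IsOpen {z : ℂ | δ < (z^2).re} :=
      isOpen_lt continuous_const (Complex.continuous_re.comp (continuous_pow 2))
    obtain ⟨ε, hε, hball⟩ := Metric.isOpen_iff.mp hopen w₀ (by
      simp only [Set.mem_setOf_eq, hδdef]; linarith)
    have hcontF' : ContinuousOn (fun u : ℝ => -(w₀/(u:ℂ)^2)) (Ioi 0) := by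
      apply ContinuousOn.neg
      exact continuousOn_const.div ((Complex.continuous_ofReal.pow 2)).continuousOn
        (fun u hu => pow_ne_zero 2 (Complex.ofReal_ne_zero.2 (ne_of_gt hu)))
    have key := hasDerivAt_integral_of_dominated_loc_of_deriv_le (μ := volume.restrict (Ioi 0))
      (F := fun w (u : ℝ) => Complex.exp (-(a^2*(u:ℂ)^2 + w^2/(u:ℂ)^2)/2))
      (F' := fun w (u : ℝ) => Complex.exp (-(a^2*(u:ℂ)^2 + w^2/(u:ℂ)^2)/2) * (-(w/(u:ℂ)^2)))
      (x₀ := w₀) (s := Metric.ball w₀ ε) (Metric.ball_mem_nhds w₀ hε)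
      (Eventually.of_forall (fun w =>
        ((contOn_cexp' (a^2) (w^2)).aestronglyMeasurable measurableSet_Ioi)))
      (integrableOn_cexp_aux' ha2 (le_of_lt hsq))
      (((contOn_cexp' (a^2) (w₀^2)).mul hcontF').aestronglyMeasurable measurableSet_Ioi)
      (bound := fun u => (‖w₀‖+ε) * ((2/δ) * Real.exp (-((a^2).re/2) * u^2)))
      ?_ ?_ ?_
    · exact key.2.differentiableAt
    · -- bound
      filter_upwards [ae_restrict_mem measurableSet_Ioi] with u hu
      intro w hwball
      have hu0 : (0:ℝ) < u := hu
      have hu2 : (0:ℝ) < u^2 := by positivity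
      rw [norm_mul, norm_cexp_aux' (a^2) (w^2) (ne_of_gt hu0)]
      have h1 : ‖-(w/(u:ℂ)^2)‖ = ‖w‖ / u^2 := by
        rw [norm_neg, norm_div]
        congr 1
        rw [show ((u:ℂ))^2 = ((u^2:ℝ):ℂ) by push_cast; ring, Complex.norm_real,
          Real.norm_eq_abs, abs_of_pos hu2]
      rw [h1]
      have hw2 : δ < ((w^2).re) := hball hwball
      have hnw : ‖w‖ ≤ ‖w₀‖ + ε := by
        have hd := mem_ball_iff_norm.mp hwball
        calc ‖w‖ = ‖w₀ + (w - w₀)‖ := by ring_nf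
          _ ≤ ‖w₀‖ + ‖w - w₀‖ := norm_add_le _ _
          _ ≤ ‖w₀‖ + ε := by linarith [le_of_lt hd]
      have hsplit : Real.exp (-((a^2).re*u^2 + (w^2).re/u^2)/2)
          = Real.exp (-((a^2).re/2) * u^2) * Real.exp (-((w^2).re/2)/u^2) := by
        rw [← Real.exp_add]; congr 1; field_simp; ring
      have hmono : Real.exp (-((w^2).re/2)/u^2) ≤ Real.exp (-(δ/2)/u^2) := by
        apply Real.exp_le_exp.2
        have h5 : (δ/2)/u^2 ≤ ((w^2).re/2)/u^2 := by gcongr <;> linarith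
        rw [neg_div, neg_div]
        linarith
      have hinv : (1/u^2) * Real.exp (-(δ/2)/u^2) ≤ 2/δ := by
        have := inv_sq_mul_exp_le (δ := δ/2) (u := u) (half_pos hδ) hu0
        calc (1/u^2) * Real.exp (-(δ/2)/u^2) ≤ 1/(δ/2) := this
          _ = 2/δ := by rw [one_div, inv_div]
      calc Real.exp (-((a^2).re*u^2 + (w^2).re/u^2)/2) * (‖w‖/u^2)
          ≤ Real.exp (-((a^2).re/2) * u^2) * Real.exp (-(δ/2)/u^2) * ((‖w₀‖+ε)/u^2) := by
            rw [hsplit]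
            apply mul_le_mul
            · exact mul_le_mul_of_nonneg_left hmono (Real.exp_nonneg _)
            · exact div_le_div_of_nonneg_right hnw hu2.le
            · positivity
            · positivity
        _ = (‖w₀‖+ε) * (Real.exp (-((a^2).re/2) * u^2) * ((1/u^2) * Real.exp (-(δ/2)/u^2))) := by
            ring
        _ ≤ (‖w₀‖+ε) * (Real.exp (-((a^2).re/2) * u^2) * (2/δ)) := by
            apply mul_le_mul_of_nonneg_left _ (by positivity)
            exact mul_le_mul_of_nonneg_left hinv (Real.exp_nonneg _)
        _ = (‖w₀‖+ε) * ((2/δ) * Real.exp (-((a^2).re/2) * u^2)) := by ring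
    · -- bound integrable
      apply Integrable.restrict
      exact ((integrable_exp_neg_mul_sq (half_pos ha2)).const_mul (2/δ)).const_mul _
    · -- differentiability in w
      refine Eventually.of_forall (fun u => fun w hwb => ?_)
      have hinner : HasDerivAt (fun w : ℂ => -(a^2*(u:ℂ)^2 + w^2/(u:ℂ)^2)/2)
          (-(w/(u:ℂ)^2)) w := by
        have h1 : HasDerivAt (fun w : ℂ => a^2*(u:ℂ)^2 + w^2/(u:ℂ)^2)
            ((2*w^1)/(u:ℂ)^2) w := ((hasDerivAt_pow 2 w).div_const ((u:ℂ)^2)).const_add _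
        have h2 : HasDerivAt (fun w : ℂ => -(a^2*(u:ℂ)^2 + w^2/(u:ℂ)^2)/2) (-((2*w^1)/(u:ℂ)^2)/2) w := (h1.neg).div_const (2:ℂ)
        convert h2 using 1
        ring
      exact hinner.cexp
  have hfd : DifferentiableOn ℂ f {z : ℂ | |z.im| < z.re} :=
    fun z hzV => (hdiff z hzV).differentiableWithinAt
  have hfa : AnalyticOnNhd ℂ f {z : ℂ | |z.im| < z.re} := hfd.analyticOnNhd sector_open'
  have hga : AnalyticOnNhd ℂ g {z : ℂ | |z.im| < z.re} := by
    refine DifferentiableOn.analyticOnNhd (fun z hzV => DifferentiableAt.differentiableWithinAt ?_)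
      sector_open'
    exact (differentiableAt_const _).mul ((differentiableAt_id.const_mul a).neg.cexp)
  have hreal : ∀ x : ℝ, 0 < x → f ((x:ℝ):ℂ) = g ((x:ℝ):ℂ) := by
    intro x hx
    rw [hfdef, hgdef]
    simp only
    rw [show ((x:ℂ))^2 = ((x:ℝ):ℂ)^2 by norm_num]
    exact glasser_step1 hx haV
  have hfreq : ∃ᶠ v in nhdsWithin (1:ℂ) {(1:ℂ)}ᶜ, f v = g v := by
    have htend : Tendsto (fun n : ℕ => (((1 + (1/(n+1)) : ℝ)):ℂ)) atTop
        (nhdsWithin (1:ℂ) {(1:ℂ)}ᶜ) := by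
      apply tendsto_nhdsWithin_of_tendsto_nhds_of_eventually_within
      · have hb : Tendsto (fun n : ℕ => (1 + (1/(n+1)) : ℝ)) atTop (nhds 1) := by
          have := tendsto_one_div_add_atTop_nhds_zero_nat (𝕜 := ℝ)
          have h2 := this.const_add (1:ℝ)
          simpa using h2
        have h4 := (Complex.continuous_ofReal.tendsto (1:ℝ)).comp hb
        rw [Complex.ofReal_one] at h4
        exact h4
      · refine Eventually.of_forall (fun n => ?_)
        simp only [Set.mem_compl_iff, Set.mem_singleton_iff]
        intro h
        have h1 : ((1 + (1/(n+1)) : ℝ):ℂ) = ((1:ℝ):ℂ) := by rw [h]; norm_num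
        have h2 : (1 + (1/(n+1)) : ℝ) = 1 := Complex.ofReal_inj.mp h1
        have : (0:ℝ) < 1/((n:ℝ)+1) := by positivity
        linarith
    exact htend.frequently (Frequently.of_forall (fun n => hreal _ (by positivity)))
  exact hfa.eqOn_of_preconnected_of_frequently_eq hga sector_convex'.isPreconnected
    (by simp [Set.mem_setOf_eq] : (1:ℂ) ∈ {z : ℂ | |z.im| < z.re}) hfreq

lemma cov_g {α : ℝ} (hα : 0 < α) (f : ℝ → ℝ) :
    ∫ x : ℝ, f x = ∫ u in Ioi (0:ℝ), (u + α^2/u^3) * f ((u^2 - α^2/u^2)/2) := by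
  set g : ℝ → ℝ := fun u => (u^2 - α^2/u^2)/2 with hgdef
  have himg : g '' (Ioi 0) = univ := by
    ext x
    simp only [mem_image, mem_Ioi, mem_univ, iff_true]
    set s := Real.sqrt (x^2 + α^2) with hs
    have hs2 : s^2 = x^2 + α^2 := Real.sq_sqrt (by positivity)
    have hsx : |x| < s := by
      rw [hs, ← Real.sqrt_sq_eq_abs]
      exact Real.sqrt_lt_sqrt (sq_nonneg x) (by nlinarith)
    have hxs : 0 < x + s := by
      rcases abs_lt.mp hsx with ⟨h1, _⟩; linarith
    refine ⟨Real.sqrt (x + s), Real.sqrt_pos.2 hxs, ?_⟩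
    have hu2 : (Real.sqrt (x+s))^2 = x + s := Real.sq_sqrt hxs.le
    rw [hgdef]
    simp only
    rw [hu2]
    field_simp
    nlinarith [hs2]
  have hderiv : ∀ u ∈ Ioi (0:ℝ), HasDerivWithinAt g (u + α^2/u^3) (Ioi 0) u := by
    intro u hu
    have hu0 : (0:ℝ) < u := hu
    have hne : u ≠ 0 := ne_of_gt hu0
    have h1 : HasDerivAt (fun u : ℝ => (u^2)⁻¹) (-(2*u^1)/((u^2)^2)) u :=
      (hasDerivAt_pow 2 u).inv (pow_ne_zero 2 hne)
    have h2 : HasDerivAt g ((2*u^1 - α^2 * (-(2*u^1)/((u^2)^2)))/2) u :=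
      (((hasDerivAt_pow 2 u).sub (h1.const_mul (α^2))).div_const 2)
    have h3 : (2*u^1 - α^2 * (-(2*u^1)/((u^2)^2)))/2 = u + α^2/u^3 := by
      field_simp
      ring
    rw [h3] at h2
    exact h2.hasDerivWithinAt
  have hinj : InjOn g (Ioi 0) := by
    intro u hu v hv h
    have hu0 : (0:ℝ) < u := hu
    have hv0 : (0:ℝ) < v := hv
    rw [hgdef] at h
    simp only at h
    have key : (u^2 - v^2) * (u^2*v^2 + α^2) = 0 := by
      field_simp at h
      nlinarith [h]
    rcases mul_eq_zero.mp key with h1 | h2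
    · have h4 : (u - v) * (u + v) = 0 := by nlinarith
      rcases mul_eq_zero.mp h4 with h5 | h6
      · linarith [sub_eq_zero.mp h5]
      · nlinarith
    · nlinarith [mul_pos (mul_pos (mul_pos hu0 hu0) hv0) hv0]
  have := integral_image_eq_integral_abs_deriv_smul measurableSet_Ioi hderiv hinj f
  rw [himg, Measure.restrict_univ] at this
  rw [this]
  apply setIntegral_congr_fun measurableSet_Ioi
  intro u hu
  have hu0 : (0:ℝ) < u := hu
  show |u + α^2/u^3| • f (g u) = (u + α^2/u^3) * f ((u^2 - α^2/u^2)/2)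
  rw [smul_eq_mul, abs_of_pos (by positivity)]

theorem stmt7 (α β : ℝ) (hβ : 0 < β) (hαβ : β < α) :
    ∫ x in Set.Ioi (0:ℝ),
        Real.sqrt (Real.sqrt (x^2 + α^2) + α) / Real.sqrt (x^2 + α^2)
          * Real.cos (2 * α * β * x) * Real.exp (-(α^2 - β^2) * Real.sqrt (x^2 + α^2))
      = Real.sqrt π * α / (α^2 + β^2) * Real.exp (-α * (α^2 + β^2)) := by
  have hα : 0 < α := hβ.trans hαβ
  set f : ℝ → ℝ := fun x => Real.sqrt (Real.sqrt (x^2 + α^2) + α) / Real.sqrt (x^2 + α^2)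
          * Real.cos (2 * α * β * x) * Real.exp (-(α^2 - β^2) * Real.sqrt (x^2 + α^2)) with hfdef
  set γ : ℝ := α^2 - β^2 with hγdef
  have hγ : 0 < γ := by rw [hγdef]; nlinarith
  have hne : α^2 + β^2 ≠ 0 := by positivity
  set h : ℝ → ℝ := fun u => Real.cos (α*β*(u^2 - α^2/u^2))
      * Real.exp (-(γ*u^2 + γ*α^2/u^2)/2) with hhdef
  have hch : ContinuousOn h (Ioi 0) := by
    apply ContinuousOn.mul
    · apply Real.continuous_cos.comp_continuousOn
      apply ContinuousOn.mul continuousOn_const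
      exact ((continuous_pow 2).continuousOn).sub
        (continuousOn_const.div (continuous_pow 2).continuousOn
          (fun u hu => pow_ne_zero 2 (ne_of_gt hu)))
    · apply Real.continuous_exp.comp_continuousOn
      apply ContinuousOn.div_const
      apply ContinuousOn.neg
      exact ((continuous_const.mul (continuous_pow 2)).continuousOn).add
        (continuousOn_const.div (continuous_pow 2).continuousOn
          (fun u hu => pow_ne_zero 2 (ne_of_gt hu)))
  have hbound : ∀ u : ℝ, u ∈ Ioi (0:ℝ) → |h u| ≤ Real.exp (-(γ*u^2 + γ*α^2/u^2)/2) := by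
    intro u hu
    rw [hhdef]
    simp only
    rw [abs_mul, Real.abs_exp]
    calc |Real.cos (α*β*(u^2 - α^2/u^2))| * Real.exp (-(γ*u^2 + γ*α^2/u^2)/2)
        ≤ 1 * Real.exp (-(γ*u^2 + γ*α^2/u^2)/2) :=
          mul_le_mul_of_nonneg_right (Real.abs_cos_le_one _) (Real.exp_nonneg _)
      _ = Real.exp (-(γ*u^2 + γ*α^2/u^2)/2) := one_mul _
  have hIh : IntegrableOn h (Ioi 0) := by
    refine Integrable.mono' (integrableOn_rexp_aux (b := γ) (d := γ*α^2) hγ (by positivity))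
      (hch.aestronglyMeasurable measurableSet_Ioi) ?_
    filter_upwards [ae_restrict_mem measurableSet_Ioi] with u hu
    rw [Real.norm_eq_abs]
    exact hbound u hu
  have hIh2 : IntegrableOn (fun u => α/u^2 * h u) (Ioi 0) := by
    refine Integrable.mono'
      ((integrableOn_inv_sq_rexp_aux (b := γ) (d := γ*α^2) hγ (by positivity)).const_mul α)
      ((continuousOn_const.div (continuous_pow 2).continuousOn
          (fun u hu => pow_ne_zero 2 (ne_of_gt hu))).mul hch |>.aestronglyMeasurable
          measurableSet_Ioi) ?_
    filter_upwards [ae_restrict_mem measurableSet_Ioi] with u hu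
    have hu0 : (0:ℝ) < u := hu
    rw [Real.norm_eq_abs, abs_mul, abs_of_pos (by positivity : (0:ℝ) < α/u^2)]
    calc α/u^2 * |h u| ≤ α/u^2 * Real.exp (-(γ*u^2 + γ*α^2/u^2)/2) :=
          mul_le_mul_of_nonneg_left (hbound u hu) (by positivity)
      _ = α * (1/u^2 * Real.exp (-(γ*u^2 + γ*α^2/u^2)/2)) := by ring
  -- complex parameters
  set a : ℂ := (α:ℂ) - (β:ℂ)*Complex.I with hadef
  set c : ℂ := (α:ℂ)^2 + (α:ℂ)*(β:ℂ)*Complex.I with hcdef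
  have haim : a.im = -β := by rw [hadef]; simp
  have hare : a.re = α := by rw [hadef]; simp
  have hcim : c.im = α*β := by rw [hcdef]; simp [← Complex.ofReal_pow]
  have hcre : c.re = α^2 := by
    rw [hcdef]
    simp [← Complex.ofReal_pow]
  have haV : |a.im| < a.re := by
    rw [haim, hare, abs_neg, abs_of_pos hβ]; exact hαβ
  have hcV : |c.im| < c.re := by
    rw [hcim, hcre, abs_of_pos (mul_pos hα hβ)]; nlinarith
  have ha2 : a^2 = ((α^2-β^2 : ℝ):ℂ) - ((2*α*β:ℝ):ℂ)*Complex.I := by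
    rw [hadef]; push_cast
    linear_combination (β:ℂ)^2*Complex.I_sq
  have hc2 : c^2 = ((α^2*(α^2-β^2) : ℝ):ℂ) + ((2*α^3*β:ℝ):ℂ)*Complex.I := by
    rw [hcdef]; push_cast
    linear_combination (α:ℂ)^2*(β:ℂ)^2*Complex.I_sq
  have hac : a*c = ((α*(α^2+β^2) : ℝ):ℂ) := by
    rw [hadef, hcdef]; push_cast
    linear_combination (-(α:ℂ)*(β:ℂ)^2)*Complex.I_sq
  have ha2re : (a^2).re = γ := by
    rw [ha2, hγdef]
    simp only [Complex.sub_re, Complex.ofReal_re, Complex.mul_re, Complex.I_re, Complex.I_im,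
      Complex.ofReal_im]
    ring
  have hc2re : (c^2).re = α^2*γ := by
    rw [hc2, hγdef]
    simp only [Complex.add_re, Complex.ofReal_re, Complex.mul_re, Complex.I_re, Complex.I_im,
      Complex.ofReal_im]
    ring
  have hEre : ∀ u : ℝ, u ∈ Ioi (0:ℝ) →
      h u = (Complex.exp (-(a^2*(u:ℂ)^2 + c^2/(u:ℂ)^2)/2)).re := by
    intro u hu
    have hu0 : (0:ℝ) < u := hu
    have hune : (u:ℝ) ≠ 0 := ne_of_gt hu0
    have hunec : ((u:ℂ)) ≠ 0 := Complex.ofReal_ne_zero.2 hune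
    have hE : -(a^2*(u:ℂ)^2 + c^2/(u:ℂ)^2)/2
        = ((-(γ*u^2 + γ*α^2/u^2)/2 : ℝ):ℂ) + ((α*β*(u^2 - α^2/u^2) : ℝ):ℂ)*Complex.I := by
      rw [ha2, hc2, hγdef]
      push_cast
      field_simp
      ring
    rw [hE, Complex.exp_re]
    simp only [Complex.add_re, Complex.ofReal_re, Complex.mul_re, Complex.I_re, Complex.I_im,
      Complex.ofReal_im, Complex.add_im, Complex.mul_im]
    rw [hhdef]
    ring_nf
  have hicexp : IntegrableOn
      (fun u : ℝ => Complex.exp (-(a^2*(u:ℂ)^2 + c^2/(u:ℂ)^2)/2)) (Ioi 0) :=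
    integrableOn_cexp_aux' (by rw [ha2re]; exact hγ) (by rw [hc2re]; positivity)
  have hswap : ∫ u in Ioi (0:ℝ), h u
      = (∫ u in Ioi (0:ℝ), Complex.exp (-(a^2*(u:ℂ)^2 + c^2/(u:ℂ)^2)/2)).re := by
    rw [setIntegral_congr_fun measurableSet_Ioi hEre]
    have := ContinuousLinearMap.integral_comp_comm Complex.reCLM hicexp
    simpa using this
  have hkey := glasser_key haV hcV
  have hval : (((Real.sqrt (2*π)) : ℂ)/(2*a) * Complex.exp (-(a*c))).re
      = Real.sqrt (2*π) * Real.exp (-(α*(α^2+β^2))) * (α/(2*(α^2+β^2))) := by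
    rw [hac, ← Complex.ofReal_neg, ← Complex.ofReal_exp]
    rw [show ((Real.sqrt (2*π)):ℂ)/(2*a) * ((Real.exp (-(α*(α^2+β^2))) : ℝ):ℂ)
        = ((Real.sqrt (2*π) * Real.exp (-(α*(α^2+β^2))) : ℝ):ℂ) * (2*a)⁻¹ by push_cast; ring]
    rw [Complex.re_ofReal_mul, Complex.inv_re]
    congr 1
    have h2are : (2*a).re = 2*α := by rw [hadef]; simp
    have h2aim : (2*a).im = -(2*β) := by rw [hadef]; simp
    rw [Complex.normSq_apply, h2are, h2aim]
    field_simp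
  -- change of variables chain
  have habs := integral_comp_abs (f := f)
  have hfeven : (fun x : ℝ => f |x|) = f := by
    funext x
    rw [hfdef]
    simp only
    rcases abs_cases x with ⟨h1, _⟩ | ⟨h1, _⟩
    · rw [h1]
    · rw [h1, show (-x)^2 = x^2 by ring, show 2*α*β*(-x) = -(2*α*β*x) by ring, Real.cos_neg]
  rw [hfeven] at habs
  have hcov := cov_g hα f
  have hpt : ∀ u ∈ Ioi (0:ℝ), (u + α^2/u^3) * f ((u^2 - α^2/u^2)/2)
      = Real.sqrt 2 * (h u + α/u^2 * h u) := by
    intro u hu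
    have hu0 : (0:ℝ) < u := hu
    have hune : u ≠ 0 := ne_of_gt hu0
    have hs1 : Real.sqrt (((u^2 - α^2/u^2)/2)^2 + α^2) = (u^2 + α^2/u^2)/2 := by
      rw [show ((u^2 - α^2/u^2)/2)^2 + α^2 = ((u^2 + α^2/u^2)/2)^2 by field_simp; ring]
      exact Real.sqrt_sq (by positivity)
    have h2 : Real.sqrt 2 ^ 2 = 2 := Real.sq_sqrt (by norm_num)
    have hs2 : Real.sqrt ((u^2 + α^2/u^2)/2 + α) = Real.sqrt 2 * (u + α/u) / 2 := by
      rw [show (u^2 + α^2/u^2)/2 + α = (Real.sqrt 2 * (u + α/u) / 2)^2 by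
        rw [div_pow, mul_pow, h2]; field_simp; ring]
      exact Real.sqrt_sq (by positivity)
    rw [hfdef]
    simp only
    rw [hs1, hs2]
    rw [show 2*α*β*((u^2-α^2/u^2)/2) = α*β*(u^2 - α^2/u^2) by ring]
    rw [show -γ*((u^2+α^2/u^2)/2) = -(γ*u^2 + γ*α^2/u^2)/2 by field_simp]
    rw [hhdef]
    simp only
    field_simp
  have hsym : ∫ u in Ioi (0:ℝ), h u = ∫ u in Ioi (0:ℝ), α/u^2 * h u := by
    rw [cov_inv hα h]
    apply setIntegral_congr_fun measurableSet_Ioi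
    intro u hu
    have hu0 : (0:ℝ) < u := hu
    have hune : u ≠ 0 := ne_of_gt hu0
    show α/u^2 * h (α/u) = α/u^2 * h u
    congr 1
    rw [hhdef]
    simp only
    have e1 : α*β*((α/u)^2 - α^2/(α/u)^2) = -(α*β*(u^2-α^2/u^2)) := by
      field_simp; ring
    have e2 : -(γ*(α/u)^2 + γ*α^2/(α/u)^2)/2 = -(γ*u^2 + γ*α^2/u^2)/2 := by
      rw [div_eq_div_iff (by norm_num) (by norm_num)]
      field_simp
      ring
    rw [e1, Real.cos_neg, e2]
  have hchain : 2 * ∫ x in Ioi (0:ℝ), f x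
      = Real.sqrt 2 * ((∫ u in Ioi (0:ℝ), h u) + (∫ u in Ioi (0:ℝ), α/u^2 * h u)) := by
    rw [← habs, hcov, setIntegral_congr_fun measurableSet_Ioi hpt, integral_const_mul]
    congr 1
    exact integral_add hIh hIh2
  rw [← hsym] at hchain
  have hIval : ∫ u in Ioi (0:ℝ), h u
      = Real.sqrt (2*π) * Real.exp (-(α*(α^2+β^2))) * (α/(2*(α^2+β^2))) := by
    rw [hswap, hkey, hval]
  have hfin : ∫ x in Ioi (0:ℝ), f x = Real.sqrt 2 * ∫ u in Ioi (0:ℝ), h u := by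
    have e : Real.sqrt 2 * ((∫ u in Ioi (0:ℝ), h u) + (∫ u in Ioi (0:ℝ), h u))
        = 2 * (Real.sqrt 2 * ∫ u in Ioi (0:ℝ), h u) := by ring
    rw [e] at hchain
    linarith
  rw [hfin, hIval]
  have hss : Real.sqrt 2 * Real.sqrt (2*π) = 2 * Real.sqrt π := by
    rw [← Real.sqrt_mul (by norm_num : (0:ℝ) ≤ 2) (2*π),
      show (2:ℝ)*(2*π) = 2^2*π by ring,
      Real.sqrt_mul (by positivity : (0:ℝ) ≤ 2^2) π,
      Real.sqrt_sq (by norm_num : (0:ℝ) ≤ 2)]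
  rw [show -α*(α^2+β^2) = -(α*(α^2+β^2)) by ring]
  rw [show Real.sqrt 2 * (Real.sqrt (2*π) * Real.exp (-(α*(α^2+β^2))) * (α/(2*(α^2+β^2))))
      = (Real.sqrt 2 * Real.sqrt (2*π)) * (Real.exp (-(α*(α^2+β^2))) * α/(2*(α^2+β^2))) by ring]
  rw [hss]
  field_simp
end

section
/- For real a > 0 and b ≥ 0, the integral ∫₀^b (√(√(a²+u²)+a)/√(a²+u²))·e^{(a−√(a²+u²))/2} du equals √(2π)·erf(√((√(a²+b²)−a)/2)). -/
open Real MeasureTheory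

noncomputable def erf (z : ℝ) : ℝ := (2 / Real.sqrt π) * ∫ u in (0:ℝ)..z, Real.exp (-u^2)

theorem stmt9 (a b : ℝ) (ha : 0 < a) (hb : 0 ≤ b) :
    ∫ u in (0:ℝ)..b,
        Real.sqrt (Real.sqrt (a^2 + u^2) + a) / Real.sqrt (a^2 + u^2)
          * Real.exp ((a - Real.sqrt (a^2 + u^2)) / 2)
      = Real.sqrt (2 * π) * erf (Real.sqrt ((Real.sqrt (a^2 + b^2) - a) / 2)) := by
  set T : ℝ := Real.sqrt ((Real.sqrt (a^2 + b^2) - a) / 2) with hTdef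
  have hspos : ∀ t : ℝ, 0 < t^2 + a := fun t => by positivity
  have hsq : ∀ t : ℝ, Real.sqrt (t^2+a) ≠ 0 := fun t => (Real.sqrt_pos.2 (hspos t)).ne'
  have hupos : ∀ u : ℝ, 0 < a^2 + u^2 := fun u => by positivity
  -- F is the integrand, g the substitution, g' its derivative
  set F : ℝ → ℝ := fun u =>
    Real.sqrt (Real.sqrt (a^2 + u^2) + a) / Real.sqrt (a^2 + u^2)
      * Real.exp ((a - Real.sqrt (a^2 + u^2)) / 2) with hF
  set g : ℝ → ℝ := fun t => 2 * t * Real.sqrt (t^2 + a) with hg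
  set g' : ℝ → ℝ := fun t => 2 * (2*t^2 + a) / Real.sqrt (t^2 + a) with hg'
  have hderiv : ∀ t ∈ Set.uIcc (0:ℝ) T, HasDerivAt g (g' t) t := by
    intro t _
    have h1 : HasDerivAt (fun t : ℝ => t^2 + a) (2*t) t := by
      simpa using ((hasDerivAt_pow 2 t).add_const a)
    have h2 : HasDerivAt (fun t : ℝ => Real.sqrt (t^2+a))
        (1 / (2 * Real.sqrt (t^2+a)) * (2*t)) t :=
      (Real.hasDerivAt_sqrt (hspos t).ne').comp t h1
    have h3 : HasDerivAt (fun t : ℝ => (2*t : ℝ)) 2 t := by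
      simpa using (hasDerivAt_id t).const_mul (2:ℝ)
    have h4 := h3.mul h2
    have hs : Real.sqrt (t^2+a) ^ 2 = t^2 + a := Real.sq_sqrt (hspos t).le
    have heq : g' t = 2 * Real.sqrt (t^2+a) + 2 * t * (1 / (2 * Real.sqrt (t^2+a)) * (2*t)) := by
      rw [hg']
      field_simp
      linear_combination (-1) * hs
    rw [heq]
    exact h4
  have hcontg' : ContinuousOn g' (Set.uIcc (0:ℝ) T) := by
    apply ContinuousOn.div
    · fun_prop
    · fun_prop
    · intro t _; exact hsq t
  have hcontF : Continuous F := by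
    apply Continuous.mul
    · apply Continuous.div
      · fun_prop
      · fun_prop
      · intro u; exact (Real.sqrt_pos.2 (hupos u)).ne'
    · fun_prop
  have hsub := intervalIntegral.integral_comp_smul_deriv hderiv hcontg' hcontF
  -- g 0 = 0, g T = b
  have hTnn : 0 ≤ T := Real.sqrt_nonneg _
  have hab : a ≤ Real.sqrt (a^2 + b^2) := by
    nlinarith [Real.sq_sqrt (show (0:ℝ) ≤ a^2+b^2 by positivity),
      Real.sqrt_nonneg (a^2+b^2), sq_nonneg (Real.sqrt (a^2+b^2) - a)]
  have hT2 : T^2 = (Real.sqrt (a^2 + b^2) - a) / 2 := by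
    rw [hTdef, Real.sq_sqrt (by linarith)]
  have hg0 : g 0 = 0 := by simp [hg]
  have hgT : g T = b := by
    show 2 * T * Real.sqrt (T^2 + a) = b
    have h1 : 2 * T * Real.sqrt (T^2 + a) = Real.sqrt (4 * T^2 * (T^2 + a)) := by
      rw [show (4:ℝ) * T^2 * (T^2+a) = (2*T)^2 * (T^2+a) by ring,
        Real.sqrt_mul (by positivity), Real.sqrt_sq (by linarith)]
    rw [h1]
    have h2 : 4 * T^2 * (T^2 + a) = b^2 := by
      rw [hT2]
      have : Real.sqrt (a^2+b^2) ^ 2 = a^2 + b^2 := Real.sq_sqrt (by positivity)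
      nlinarith
    rw [h2, Real.sqrt_sq hb]
  rw [hg0, hgT] at hsub
  -- pointwise identity for the substituted integrand
  have hpt : ∀ t : ℝ, g' t • F (g t) = (2 * Real.sqrt 2) * Real.exp (-t^2) := by
    intro t
    have hs : Real.sqrt (t^2+a) ^ 2 = t^2 + a := Real.sq_sqrt (hspos t).le
    have h1 : a^2 + (g t)^2 = (2*t^2 + a)^2 := by
      rw [hg]; simp only; nlinarith
    have h2 : Real.sqrt (a^2 + (g t)^2) = 2*t^2 + a := by
      rw [h1, Real.sqrt_sq (by positivity)]
    have h3 : Real.sqrt (2*t^2 + a + a) = Real.sqrt 2 * Real.sqrt (t^2 + a) := by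
      rw [← Real.sqrt_mul (by norm_num)]
      ring_nf
    have h4 : (a - (2*t^2 + a)) / 2 = -t^2 := by ring
    rw [hF, hg', smul_eq_mul]
    simp only
    rw [h2, h3, h4]
    have hne : (2*t^2 + a) ≠ 0 := by positivity
    field_simp
  have hcongr : (∫ x in (0:ℝ)..T, g' x • (F ∘ g) x)
      = ∫ x in (0:ℝ)..T, (2 * Real.sqrt 2) * Real.exp (-x^2) :=
    intervalIntegral.integral_congr (fun t _ => hpt t)
  rw [hcongr] at hsub
  rw [show (∫ u in (0:ℝ)..b,
        Real.sqrt (Real.sqrt (a^2 + u^2) + a) / Real.sqrt (a^2 + u^2)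
          * Real.exp ((a - Real.sqrt (a^2 + u^2)) / 2)) = ∫ u in (0:ℝ)..b, F u from rfl,
    ← hsub]
  rw [intervalIntegral.integral_const_mul, erf]
  have hπ : (0:ℝ) < π := Real.pi_pos
  have : Real.sqrt (2*π) * (2 / Real.sqrt π) = 2 * Real.sqrt 2 := by
    rw [Real.sqrt_mul (by norm_num)]
    field_simp [Real.sqrt_ne_zero'.2 hπ]
  rw [← mul_assoc, this]
end

section
/- For real a, b, c > 0, the finite integral ∫₀^c (√(b+√(b²+u²))/√(b²+u²))·e^{-a√(b²+u²)} du equals √(π/a)·e^{-ab}·erf(√(a(√(b²+c²)−b))). -/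
open Real MeasureTheory

theorem erf_hasDerivAt (z : ℝ) :
    HasDerivAt erf ((2 / Real.sqrt π) * Real.exp (-z^2)) z := by
  have hcont : Continuous fun t : ℝ => Real.exp (-t^2) := by continuity
  have h1 : HasDerivAt (fun z : ℝ => ∫ u in (0:ℝ)..z, Real.exp (-u^2)) (Real.exp (-z^2)) z :=
    intervalIntegral.integral_hasDerivAt_right (hcont.intervalIntegrable 0 z)
      (hcont.stronglyMeasurableAtFilter _ _) hcont.continuousAt
  exact h1.const_mul (2 / Real.sqrt π)

theorem stmt11 (a b c : ℝ) (ha : 0 < a) (hb : 0 < b) (hc : 0 < c) :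
    ∫ u in (0:ℝ)..c,
        Real.sqrt (b + Real.sqrt (b^2 + u^2)) / Real.sqrt (b^2 + u^2)
          * Real.exp (-a * Real.sqrt (b^2 + u^2))
      = Real.sqrt (π / a) * Real.exp (-(a * b))
        * erf (Real.sqrt (a * (Real.sqrt (b^2 + c^2) - b))) := by
  have hπ : (0:ℝ) < π := Real.pi_pos
  set f : ℝ → ℝ := fun u => Real.sqrt (b + Real.sqrt (b^2 + u^2)) / Real.sqrt (b^2 + u^2)
          * Real.exp (-a * Real.sqrt (b^2 + u^2)) with hfdef
  set F : ℝ → ℝ := fun u => Real.sqrt (π / a) * Real.exp (-(a * b))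
        * erf (Real.sqrt (a * (Real.sqrt (b^2 + u^2) - b))) with hFdef
  have hs_pos : ∀ u : ℝ, 0 < Real.sqrt (b^2 + u^2) := fun u =>
    Real.sqrt_pos.2 (by positivity)
  have hs_ge : ∀ u : ℝ, b ≤ Real.sqrt (b^2 + u^2) := by
    intro u
    nth_rewrite 1 [show b = Real.sqrt (b^2) from (Real.sqrt_sq hb.le).symm]
    exact Real.sqrt_le_sqrt (by nlinarith)
  -- continuity of f
  have hfc : Continuous f := by
    apply Continuous.mul
    · apply Continuous.div
      · fun_prop
      · fun_prop
      · exact fun u => (hs_pos u).ne'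
    · fun_prop
  -- continuity of F
  have herfc : Continuous erf :=
    continuous_iff_continuousAt.2 fun z => (erf_hasDerivAt z).continuousAt
  have hFc : Continuous F := by
    apply Continuous.mul continuous_const
    exact herfc.comp (by fun_prop)
  -- derivative on Ioo
  have hderiv : ∀ u ∈ Set.Ioo (0:ℝ) c, HasDerivAt F (f u) u := by
    intro u hu
    obtain ⟨hu0, huc⟩ := hu
    set S := Real.sqrt (b^2 + u^2) with hSdef
    have hS2 : S^2 = b^2 + u^2 := Real.sq_sqrt (by positivity)
    have hSb : b < S := by
      nth_rewrite 1 [show b = Real.sqrt (b^2) from (Real.sqrt_sq hb.le).symm]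
      exact Real.sqrt_lt_sqrt (by positivity) (by nlinarith)
    have hSpos : 0 < S := hs_pos u
    have hinner_pos : 0 < a * (S - b) := by
      apply mul_pos ha; linarith
    have hs : HasDerivAt (fun x : ℝ => Real.sqrt (b^2 + x^2)) (u / S) u := by
      have h1 : HasDerivAt (fun x : ℝ => b^2 + x^2) (2 * u) u := by
        simpa using ((hasDerivAt_pow 2 u).const_add (b^2))
      have := h1.sqrt (by positivity)
      convert this using 1
      rw [hSdef]
      field_simp
    have hg : HasDerivAt (fun x : ℝ => Real.sqrt (a * (Real.sqrt (b^2 + x^2) - b)))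
        ((a * (u / S)) / (2 * Real.sqrt (a * (S - b)))) u := by
      have h1 : HasDerivAt (fun x : ℝ => a * (Real.sqrt (b^2 + x^2) - b)) (a * (u / S)) u :=
        (hs.sub_const b).const_mul a
      exact h1.sqrt hinner_pos.ne'
    set G := Real.sqrt (a * (S - b)) with hGdef
    have hG2 : G^2 = a * (S - b) := Real.sq_sqrt hinner_pos.le
    have hGpos : 0 < G := Real.sqrt_pos.2 hinner_pos
    have hF : HasDerivAt F
        (Real.sqrt (π / a) * Real.exp (-(a * b)) *
          ((2 / Real.sqrt π) * Real.exp (-G^2) * ((a * (u / S)) / (2 * G)))) u := by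
      have := ((erf_hasDerivAt G).comp u hg).const_mul
        (Real.sqrt (π / a) * Real.exp (-(a * b)))
      simpa [hFdef, mul_assoc] using this
    convert hF using 1
    -- algebra: show f u equals the derivative expression
    have hGsplit : G = Real.sqrt a * Real.sqrt (S - b) :=
      Real.sqrt_mul ha.le _
    have hu_eq : u = Real.sqrt (S - b) * Real.sqrt (S + b) := by
      rw [← Real.sqrt_mul (by linarith) (S + b)]
      rw [show (S - b) * (S + b) = u^2 by nlinarith]
      exact (Real.sqrt_sq hu0.le).symm
    have hexp : Real.exp (-G^2) = Real.exp (-(a * S)) * Real.exp (a * b) := by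
      rw [← Real.exp_add, hG2]; ring_nf
    have hsqrtdiv : Real.sqrt (π / a) = Real.sqrt π / Real.sqrt a :=
      Real.sqrt_div' π ha.le ▸ Real.sqrt_div (le_of_lt hπ) a
    have hππ : Real.sqrt π * Real.sqrt π = π := Real.mul_self_sqrt hπ.le
    have haa : Real.sqrt a * Real.sqrt a = a := Real.mul_self_sqrt ha.le
    have hπne : Real.sqrt π ≠ 0 := by positivity
    have hane : Real.sqrt a ≠ 0 := by positivity
    have hSbne : Real.sqrt (S - b) ≠ 0 := by
      refine (Real.sqrt_pos.2 ?_).ne'; linarith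
    have hbS : Real.sqrt (b + S) = Real.sqrt (S + b) := by rw [add_comm]
    have hexpab : Real.exp (-(a*b)) * Real.exp (a*b) = 1 := by
      rw [← Real.exp_add]; simp
    rw [hfdef]
    simp only [← hSdef]
    rw [hbS, hexp, hGsplit, hu_eq]
    have h1 : -a * S = -(a * S) := by ring
    rw [h1]
    field_simp
    rw [hsqrtdiv, mul_comm b a, mul_assoc, hexpab, mul_one]
    field_simp
    exact Real.sq_sqrt ha.le
  have hint : IntervalIntegrable f volume 0 c := hfc.intervalIntegrable 0 c
  have key : ∫ u in (0:ℝ)..c, f u = F c - F 0 :=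
    intervalIntegral.integral_eq_sub_of_hasDeriv_right_of_le hc.le hFc.continuousOn
      (fun x hx => (hderiv x hx).hasDerivWithinAt) hint
  have hF0 : F 0 = 0 := by
    simp [hFdef, erf, Real.sqrt_sq hb.le]
  rw [key, hF0, sub_zero]
end

section
/- The integral over x from 0 to ∞ of (√(√(x²+4)−2)/√(x²+4))·sin(4x)·e^{-3√(x²+4)} equals √π/(5e^{10}). -/
open Real MeasureTheory Complex Set Filter Topology intervalIntegral

noncomputable def F (z : ℂ) : ℂ := ∫ t in (0:ℝ)..1, z * Complex.exp (-(z * t)^2)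

lemma psi_hasDerivAt (c w : ℂ) :
    HasDerivAt (fun x : ℂ => x * Complex.exp (-(x * c)^2))
      ((1 - 2*c^2*w^2) * Complex.exp (-(w*c)^2)) w := by
  have h1 : HasDerivAt (fun x : ℂ => -(x * c)^2) (-(2*c^2*w)) w := by
    have h0 : HasDerivAt (fun x : ℂ => x * c) c w := by
      simpa using (hasDerivAt_id w).mul_const c
    have := (h0.pow 2).neg
    refine this.congr_deriv ?_
    ring
  have h2 : HasDerivAt (fun x : ℂ => Complex.exp (-(x * c)^2))
      (Complex.exp (-(w*c)^2) * (-(2*c^2*w))) w := h1.cexp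
  have := (hasDerivAt_id w).mul h2
  refine this.congr_deriv ?_
  simp only [id]
  ring

lemma F_hasDerivAt (z : ℂ) : HasDerivAt F (Complex.exp (-z^2)) z := by
  have key : HasDerivAt (fun x : ℂ => ∫ t in (0:ℝ)..1, x * Complex.exp (-(x * (t:ℂ))^2))
      (∫ t in (0:ℝ)..1, (1 - 2*(t:ℂ)^2*z^2) * Complex.exp (-(z*(t:ℂ))^2)) z := by
    set R : ℝ := ‖z‖ + 1 with hR
    have hcont : ∀ x : ℂ, Continuous fun t : ℝ => x * Complex.exp (-(x * (t:ℂ))^2) := by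
      intro x
      fun_prop
    refine (intervalIntegral.hasDerivAt_integral_of_dominated_loc_of_deriv_le
      (F' := fun (x:ℂ) (t:ℝ) => (1 - 2*(t:ℂ)^2*x^2) * Complex.exp (-(x*(t:ℂ))^2))
      (bound := fun _ => (1 + 2*R^2) * Real.exp (R^2))
      (Metric.ball_mem_nhds z one_pos) ?_ ?_ ?_ ?_ ?_ ?_).2
    · exact Eventually.of_forall fun x => ((hcont x).aestronglyMeasurable)
    · exact ((hcont z)).intervalIntegrable 0 1
    · apply Continuous.aestronglyMeasurable
      fun_prop
    · refine Eventually.of_forall fun t ht x hx => ?_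
      have htt : t ∈ Set.Ioc (0:ℝ) 1 := by
        simpa [Set.uIoc_of_le (zero_le_one)] using ht
      have ht1 : |t| ≤ 1 := by
        rw [abs_of_pos htt.1]; exact htt.2
      have hxR : ‖x‖ ≤ R := by
        have := mem_ball_iff_norm.mp hx
        have : ‖x - z‖ ≤ 1 := this.le
        calc ‖x‖ = ‖z + (x - z)‖ := by ring_nf
        _ ≤ ‖z‖ + ‖x - z‖ := norm_add_le _ _
        _ ≤ R := by rw [hR]; linarith
      have hnorm : ‖Complex.exp (-(x*(t:ℂ))^2)‖ ≤ Real.exp (R^2) := by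
        rw [Complex.norm_exp]
        apply Real.exp_le_exp.mpr
        have h1 : (-(x*(t:ℂ))^2).re ≤ ‖(-(x*(t:ℂ))^2)‖ := Complex.re_le_norm _
        have h2 : ‖(-(x*(t:ℂ))^2)‖ = (‖(x*(t:ℂ))‖)^2 := by
          rw [norm_neg, norm_pow]
        have h3 : ‖(x*(t:ℂ))‖ ≤ R := by
          rw [norm_mul, Complex.norm_real, Real.norm_eq_abs]
          calc ‖x‖ * |t| ≤ R * 1 := by
                apply mul_le_mul hxR ht1 (abs_nonneg t) (by positivity)
          _ = R := mul_one R
        have h4 : (‖(x*(t:ℂ))‖)^2 ≤ R^2 := by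
          apply pow_le_pow_left₀ (by positivity) h3
        linarith
      calc ‖(1 - 2*(t:ℂ)^2*x^2) * Complex.exp (-(x*(t:ℂ))^2)‖
          = ‖(1 - 2*(t:ℂ)^2*x^2)‖ * ‖Complex.exp (-(x*(t:ℂ))^2)‖ := norm_mul _ _
        _ ≤ (1 + 2*R^2) * Real.exp (R^2) := by
            apply mul_le_mul _ hnorm (norm_nonneg _) (by positivity)
            calc ‖(1 - 2*(t:ℂ)^2*x^2)‖ ≤ ‖(1:ℂ)‖ + ‖2*(t:ℂ)^2*x^2‖ := norm_sub_le _ _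
              _ ≤ 1 + 2*R^2 := by
                  simp only [norm_one]
                  gcongr
                  rw [show (2:ℂ)*(t:ℂ)^2*x^2 = ((2:ℝ):ℂ)*((t:ℝ):ℂ)^2*x^2 by norm_num]
                  rw [norm_mul, norm_mul, norm_pow, norm_pow]
                  simp only [Complex.norm_real, Real.norm_ofNat,
                    Real.norm_eq_abs]
                  have h5 : |t|^2 ≤ 1 := pow_le_one₀ (abs_nonneg t) ht1
                  have h6 : |(2:ℝ)| = 2 := by norm_num
                  have h7 : (0:ℝ) ≤ ‖x‖ := norm_nonneg x
                  have h8 : ‖x‖ ≤ R := hxR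
                  nlinarith [sq_nonneg (‖x‖), pow_le_pow_left₀ h7 h8 2]
    · apply Continuous.intervalIntegrable; continuity
    · refine Eventually.of_forall fun t ht x hx => ?_
      exact psi_hasDerivAt (t:ℂ) x
  have hval : (∫ t in (0:ℝ)..1, (1 - 2*(t:ℂ)^2*z^2) * Complex.exp (-(z*(t:ℂ))^2))
      = Complex.exp (-z^2) := by
    have hft : ∀ t : ℝ, HasDerivAt (fun s : ℝ => (s:ℂ) * Complex.exp (-((s:ℂ) * z)^2))
        ((1 - 2*z^2*(t:ℂ)^2) * Complex.exp (-((t:ℂ)*z)^2)) t := by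
      intro t
      exact (psi_hasDerivAt z (t:ℂ)).comp_ofReal
    have := intervalIntegral.integral_eq_sub_of_hasDerivAt
      (f := fun s : ℝ => (s:ℂ) * Complex.exp (-((s:ℂ) * z)^2))
      (f' := fun t : ℝ => (1 - 2*z^2*(t:ℂ)^2) * Complex.exp (-((t:ℂ)*z)^2))
      (a := 0) (b := 1) (fun t _ => hft t) (by apply Continuous.intervalIntegrable; fun_prop)
    rw [show (∫ t in (0:ℝ)..1, (1 - 2*(t:ℂ)^2*z^2) * Complex.exp (-(z*(t:ℂ))^2))
        = ∫ t in (0:ℝ)..1, (1 - 2*z^2*(t:ℂ)^2) * Complex.exp (-((t:ℂ)*z)^2) by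
      congr 1; funext t; ring_nf]
    rw [this]
    norm_num
  have : F = fun x : ℂ => ∫ t in (0:ℝ)..1, x * Complex.exp (-(x * (t:ℂ))^2) := rfl
  rw [this, ← hval] at *
  exact key

lemma F_zero : F 0 = 0 := by simp [F]

lemma F_neg (z : ℂ) : F (-z) = - F z := by
  unfold F
  rw [← intervalIntegral.integral_neg]
  congr 1; funext t; ring_nf

lemma cpow_half_eq {z w : ℂ} (hw : 0 < w.re) (h : w^2 = z) : z ^ (1/2 : ℂ) = w := by
  have hw0 : w ≠ 0 := by
    intro h0; rw [h0] at hw; simp at hw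
  have hz0 : z ≠ 0 := by
    rw [← h]; exact pow_ne_zero 2 hw0
  set u := z ^ (1/2 : ℂ) with hu
  have hu2 : u^2 = z := by
    rw [hu, sq, ← Complex.cpow_add _ _ hz0]
    norm_num
  have hure : 0 ≤ u.re := by
    rw [hu, Complex.cpow_def_of_ne_zero hz0, Complex.exp_re]
    apply mul_nonneg (Real.exp_pos _).le
    apply Real.cos_nonneg_of_mem_Icc
    have him : (Complex.log z * (1/2)).im = z.arg / 2 := by
      simp [Complex.log_im]
      ring
    rw [him]
    constructor
    · have := Complex.neg_pi_lt_arg z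
      linarith [Real.pi_pos]
    · have := Complex.arg_le_pi z
      linarith [Real.pi_pos]
  have hcases : u = w ∨ u = -w := by
    have : (u - w) * (u + w) = 0 := by
      have : u^2 - w^2 = 0 := by rw [hu2, h]; ring
      linear_combination this
    rcases mul_eq_zero.mp this with h1 | h1
    · left; linear_combination h1
    · right; linear_combination h1
  rcases hcases with h1 | h1
  · exact hu ▸ h1
  · exfalso
    rw [h1] at hure
    simp only [Complex.neg_re] at hure
    linarith

lemma inner_line_hasDerivAt (c d : ℂ) (s : ℝ) :
    HasDerivAt (fun s : ℝ => c + (s:ℂ) * d) d s := by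
  have h0 : HasDerivAt (fun z : ℂ => c + z * d) d ((s:ℝ):ℂ) := by
    simpa using ((hasDerivAt_id ((s:ℝ):ℂ)).mul_const d).const_add c
  exact h0.comp_ofReal

lemma F_line_hasDerivAt (c d : ℂ) (s : ℝ) :
    HasDerivAt (fun s : ℝ => F (c + (s:ℂ) * d))
      (Complex.exp (-(c + (s:ℂ) * d)^2) * d) s :=
  by have := (F_hasDerivAt (c + (s:ℂ)*d)).comp s (inner_line_hasDerivAt c d s); exact this

lemma F_sub_eq (z₁ z₂ : ℂ) :
    F z₂ - F z₁ = ∫ t in (0:ℝ)..1, Complex.exp (-(z₁ + (t:ℂ)*(z₂ - z₁))^2) * (z₂ - z₁) := by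
  have := intervalIntegral.integral_eq_sub_of_hasDerivAt
    (f := fun t : ℝ => F (z₁ + (t:ℂ) * (z₂ - z₁)))
    (f' := fun t : ℝ => Complex.exp (-(z₁ + (t:ℂ)*(z₂ - z₁))^2) * (z₂ - z₁))
    (a := 0) (b := 1) (fun t _ => F_line_hasDerivAt z₁ (z₂ - z₁) t)
    (by apply Continuous.intervalIntegrable; fun_prop)
  rw [this]
  norm_num

lemma F_sub_bound (z₁ z₂ : ℂ)
    (h : ∀ t ∈ Icc (0:ℝ) 1, 0 ≤ ((z₁ + (t:ℂ)*(z₂ - z₁))^2).re) :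
    ‖F z₂ - F z₁‖ ≤ ‖z₂ - z₁‖ := by
  rw [F_sub_eq]
  have := intervalIntegral.norm_integral_le_of_norm_le_const
    (f := fun t : ℝ => Complex.exp (-(z₁ + (t:ℂ)*(z₂ - z₁))^2) * (z₂ - z₁))
    (a := 0) (b := 1) (C := ‖z₂ - z₁‖) ?_
  · simpa using this
  · intro t ht
    have htI : t ∈ Icc (0:ℝ) 1 := by
      have : t ∈ Set.Ioc (0:ℝ) 1 := by simpa [Set.uIoc_of_le (zero_le_one)] using ht
      exact ⟨this.1.le, this.2⟩
    rw [norm_mul, Complex.norm_exp]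
    have h1 : (-(z₁ + (t:ℂ)*(z₂ - z₁))^2).re ≤ 0 := by
      have := h t htI
      simp only [Complex.neg_re]
      linarith
    calc Real.exp ((-(z₁ + (t:ℂ)*(z₂ - z₁))^2).re) * ‖z₂ - z₁‖
        ≤ 1 * ‖z₂ - z₁‖ := by
          apply mul_le_mul_of_nonneg_right _ (norm_nonneg _)
          calc Real.exp _ ≤ Real.exp 0 := Real.exp_le_exp.mpr h1
          _ = 1 := Real.exp_zero
      _ = ‖z₂ - z₁‖ := one_mul _

lemma tendsto_F_ray {d : ℂ} (hd2 : 0 < (d^2).re) (hdre : 0 < d.re) :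
    Tendsto (fun r : ℝ => F ((r:ℂ) * d)) atTop (𝓝 ((Real.sqrt π : ℂ) / 2)) := by
  have hd0 : d ≠ 0 := fun h => by simp [h] at hdre
  have heq : ∀ r : ℝ, F ((r:ℂ) * d) = ∫ s in (0:ℝ)..r, d * Complex.exp (-(d^2 * (s:ℂ)^2)) := by
    intro r
    have := intervalIntegral.integral_eq_sub_of_hasDerivAt
      (f := fun s : ℝ => F ((0:ℂ) + (s:ℂ) * d))
      (f' := fun s : ℝ => Complex.exp (-((0:ℂ) + (s:ℂ)*d)^2) * d)
      (a := 0) (b := r) (fun s _ => F_line_hasDerivAt 0 d s)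
      (by apply Continuous.intervalIntegrable; fun_prop)
    simp only [zero_add] at this
    rw [show (∫ s in (0:ℝ)..r, d * Complex.exp (-(d^2 * (s:ℂ)^2)))
        = ∫ s in (0:ℝ)..r, Complex.exp (-((s:ℂ)*d)^2) * d by
      congr 1; funext s; ring_nf]
    rw [this]
    simp [F_zero]
  have hint : IntegrableOn (fun s : ℝ => d * Complex.exp (-(d^2 * (s:ℂ)^2))) (Ioi 0) := by
    have h0 : Integrable (fun s : ℝ => Complex.exp (-(d^2) * (s:ℂ)^2)) := by
      exact integrable_cexp_neg_mul_sq hd2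
    have h1 := (h0.const_mul d).integrableOn (s := Ioi 0)
    refine h1.congr_fun (fun s _ => ?_) measurableSet_Ioi
    ring_nf
  have hlim := MeasureTheory.intervalIntegral_tendsto_integral_Ioi 0 hint tendsto_id
  have hval : (∫ s in Ioi (0:ℝ), d * Complex.exp (-(d^2 * (s:ℂ)^2))) = (Real.sqrt π : ℂ) / 2 := by
    rw [MeasureTheory.integral_const_mul]
    have hg : (∫ s in Ioi (0:ℝ), Complex.exp (-(d^2 * (s:ℂ)^2)))
        = ((π:ℂ) / d^2) ^ (1/2 : ℂ) / 2 := by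
      rw [show (fun s : ℝ => Complex.exp (-(d^2 * (s:ℂ)^2)))
          = fun s : ℝ => Complex.exp (-(d^2) * (s:ℂ)^2) by funext s; ring_nf]
      exact integral_gaussian_complex_Ioi hd2
    rw [hg]
    have hw : ((π:ℂ) / d^2) ^ (1/2 : ℂ) = (Real.sqrt π : ℂ) / d := by
      apply cpow_half_eq
      · rw [div_eq_mul_inv, show (Real.sqrt π : ℂ) = ((Real.sqrt π : ℝ) : ℂ) from rfl]
        rw [Complex.re_ofReal_mul]
        apply mul_pos (Real.sqrt_pos.mpr Real.pi_pos)
        rw [Complex.inv_re]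
        exact div_pos hdre (Complex.normSq_pos.mpr hd0)
      · rw [div_pow, div_eq_div_iff (pow_ne_zero 2 hd0) (pow_ne_zero 2 hd0)]
        norm_cast
        rw [Real.sq_sqrt Real.pi_pos.le]
    rw [hw]
    field_simp
  rw [← hval]
  have : (fun r : ℝ => F ((r:ℂ) * d))
      = fun r : ℝ => ∫ s in (0:ℝ)..r, d * Complex.exp (-(d^2 * (s:ℂ)^2)) := funext heq
  rw [this]
  exact hlim

noncomputable def sc : ℂ := ((Real.sqrt 2 : ℝ) : ℂ)
noncomputable def ca : ℂ := sc - (sc)⁻¹ * Complex.I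
noncomputable def cb : ℂ := sc + (sc)⁻¹ * Complex.I

lemma hs2 : sc^2 = 2 := by
  rw [sc, ← Complex.ofReal_pow, Real.sq_sqrt (by norm_num : (0:ℝ) ≤ 2)]
  norm_num

lemma hs0 : sc ≠ 0 := by
  rw [sc]
  simp only [ne_eq, Complex.ofReal_eq_zero]
  positivity

lemma hsinv : sc⁻¹ = sc / 2 := by
  field_simp [hs0]
  linear_combination -hs2

lemma ha2 : ca^2 = 3/2 - 2*Complex.I := by
  rw [ca, hsinv]
  linear_combination (1 - Complex.I + Complex.I^2/4) * hs2 + (1/2) * Complex.I_sq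

lemma hb2 : cb^2 = 3/2 + 2*Complex.I := by
  rw [cb, hsinv]
  linear_combination (1 + Complex.I + Complex.I^2/4) * hs2 + (1/2) * Complex.I_sq

lemma hab : ca * cb = 5/2 := by
  rw [ca, cb, hsinv]
  linear_combination (1 - Complex.I^2/4) * hs2 - (1/2) * Complex.I_sq

lemma ca_re : ca.re = Real.sqrt 2 := by simp [ca, sc]
lemma cb_re : cb.re = Real.sqrt 2 := by simp [cb, sc]
lemma ca_re_pos : 0 < ca.re := by rw [ca_re]; positivity
lemma cb_re_pos : 0 < cb.re := by rw [cb_re]; positivity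
lemma ca2_re_pos : 0 < (ca^2).re := by rw [ha2]; norm_num
lemma cb2_re_pos : 0 < (cb^2).re := by rw [hb2]; norm_num

lemma re_comb (c₁ c₂ : ℝ) :
    (((c₁:ℂ)*ca + (c₂:ℂ)*cb)^2).re = 3/2*(c₁^2+c₂^2) + 5*(c₁*c₂) := by
  have hz : (c₁:ℂ)*ca + (c₂:ℂ)*cb
      = (((c₁+c₂)*Real.sqrt 2 : ℝ) : ℂ) + (((c₂-c₁)*(Real.sqrt 2)⁻¹ : ℝ) : ℂ)*Complex.I := by
    rw [ca, cb, sc]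
    push_cast
    ring
  rw [hz]
  have hsq : ∀ p q : ℝ, (((p:ℝ):ℂ) + ((q:ℝ):ℂ)*Complex.I)^2
      = ((p^2 - q^2 : ℝ) : ℂ) + ((2*p*q : ℝ):ℂ)*Complex.I := by
    intro p q
    push_cast
    linear_combination (q:ℂ)^2 * Complex.I_sq
  rw [hsq]
  simp only [Complex.add_re, Complex.ofReal_re, Complex.mul_re, Complex.I_re, Complex.I_im,
    Complex.ofReal_im]
  have h2 : (Real.sqrt 2)^2 = 2 := Real.sq_sqrt (by norm_num)
  have hq : ((Real.sqrt 2)⁻¹)^2 = 1/2 := by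
    rw [← one_div, div_pow, h2]; norm_num
  rw [mul_pow, mul_pow, h2, hq]
  ring

noncomputable def Wc (z : ℂ) : ℂ := ca*z - 2*cb/z
noncomputable def Vc (z : ℂ) : ℂ := ca*z + 2*cb/z
noncomputable def AA : ℂ := (cb - ca)/5
noncomputable def BB : ℂ := (ca + cb)/5
noncomputable def gc (z : ℂ) : ℂ :=
  sc * (1 - 2/z^2) * Complex.exp (-(ca^2*z^2 + 4*cb^2/z^2))
noncomputable def Φc (z : ℂ) : ℂ :=
  sc * (AA * Complex.exp (-10) * F (Wc z) + BB * Complex.exp 10 * F (Vc z))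
noncomputable def gr (y : ℝ) : ℂ := gc (y:ℂ)
noncomputable def Φr (y : ℝ) : ℂ := Φc (y:ℂ)

lemma Wc_hasDerivAt {z : ℂ} (hz : z ≠ 0) : HasDerivAt Wc (ca + 2*cb/z^2) z := by
  have h1 : HasDerivAt (fun z : ℂ => ca * z) ca z := by
    simpa using (hasDerivAt_id z).const_mul ca
  have h2 : HasDerivAt (fun z : ℂ => 2*cb/z) (2*cb * (-(z^2)⁻¹)) z := by
    simpa [div_eq_mul_inv] using (hasDerivAt_inv hz).const_mul (2*cb)
  have := h1.sub h2
  refine this.congr_deriv ?_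
  field_simp
  ring

lemma Vc_hasDerivAt {z : ℂ} (hz : z ≠ 0) : HasDerivAt Vc (ca - 2*cb/z^2) z := by
  have h1 : HasDerivAt (fun z : ℂ => ca * z) ca z := by
    simpa using (hasDerivAt_id z).const_mul ca
  have h2 : HasDerivAt (fun z : ℂ => 2*cb/z) (2*cb * (-(z^2)⁻¹)) z := by
    simpa [div_eq_mul_inv] using (hasDerivAt_inv hz).const_mul (2*cb)
  have := h1.add h2
  refine this.congr_deriv ?_
  field_simp
  try ring

lemma exp_W_id {z : ℂ} (hz : z ≠ 0) :
    Complex.exp (-(10:ℂ)) * Complex.exp (-(Wc z)^2)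
      = Complex.exp (-(ca^2*z^2 + 4*cb^2/z^2)) := by
  rw [← Complex.exp_add]
  congr 1
  rw [Wc]
  field_simp
  linear_combination (4*z^2) * hab

lemma exp_V_id {z : ℂ} (hz : z ≠ 0) :
    Complex.exp ((10:ℂ)) * Complex.exp (-(Vc z)^2)
      = Complex.exp (-(ca^2*z^2 + 4*cb^2/z^2)) := by
  rw [← Complex.exp_add]
  congr 1
  rw [Vc]
  field_simp
  linear_combination (-4*z^2) * hab

lemma combo_id {z : ℂ} (hz : z ≠ 0) :
    AA*(ca + 2*cb/z^2) + BB*(ca - 2*cb/z^2) = 1 - 2/z^2 := by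
  rw [AA, BB]
  field_simp
  linear_combination (2*z^2 - 4) * hab

lemma Φc_hasDerivAt {z : ℂ} (hz : z ≠ 0) : HasDerivAt Φc (gc z) z := by
  have hFW : HasDerivAt (fun z => F (Wc z))
      (Complex.exp (-(Wc z)^2) * (ca + 2*cb/z^2)) z :=
    (F_hasDerivAt (Wc z)).comp z (Wc_hasDerivAt hz)
  have hFV : HasDerivAt (fun z => F (Vc z))
      (Complex.exp (-(Vc z)^2) * (ca - 2*cb/z^2)) z :=
    (F_hasDerivAt (Vc z)).comp z (Vc_hasDerivAt hz)
  have hsum := ((hFW.const_mul (AA * Complex.exp (-10))).add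
    (hFV.const_mul (BB * Complex.exp 10))).const_mul sc
  have : HasDerivAt Φc
      (sc * (AA * Complex.exp (-10) * (Complex.exp (-(Wc z)^2) * (ca + 2*cb/z^2))
        + BB * Complex.exp 10 * (Complex.exp (-(Vc z)^2) * (ca - 2*cb/z^2)))) z := hsum
  convert this using 1
  have h1 := exp_W_id hz
  have h2 := exp_V_id hz
  have h3 := combo_id hz
  rw [gc]
  calc sc * (1 - 2/z^2) * Complex.exp (-(ca^2*z^2 + 4*cb^2/z^2))
      = sc * Complex.exp (-(ca^2*z^2 + 4*cb^2/z^2)) * (AA*(ca + 2*cb/z^2) + BB*(ca - 2*cb/z^2)) := by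
        rw [h3]; ring
    _ = sc * ((Complex.exp (-(10:ℂ)) * Complex.exp (-(Wc z)^2)) * (AA*(ca + 2*cb/z^2))
        + (Complex.exp ((10:ℂ)) * Complex.exp (-(Vc z)^2)) * (BB*(ca - 2*cb/z^2))) := by
        rw [h1, h2]; ring
    _ = _ := by ring

lemma Φr_hasDerivAt {y : ℝ} (hy : 0 < y) : HasDerivAt Φr (gr y) y := by
  have := (Φc_hasDerivAt (z := (y:ℂ)) (by exact_mod_cast ne_of_gt hy)).comp_ofReal
  exact this

lemma tendsto_FW_top :
    Tendsto (fun y : ℝ => F (Wc (y:ℂ))) atTop (𝓝 ((Real.sqrt π : ℂ)/2)) := by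
  have h1 : Tendsto (fun y : ℝ => F ((y:ℂ) * ca)) atTop (𝓝 ((Real.sqrt π : ℂ)/2)) :=
    tendsto_F_ray ca2_re_pos ca_re_pos
  have h2 : Tendsto (fun y : ℝ => F (Wc (y:ℂ)) - F ((y:ℂ)*ca)) atTop (𝓝 0) := by
    apply squeeze_zero_norm' (a := fun y : ℝ => ‖(2*cb : ℂ)‖ * y⁻¹)
    · filter_upwards [eventually_ge_atTop (3:ℝ)] with y hy
      have hy0 : (0:ℝ) < y := by linarith
      have hyc : (y:ℂ) ≠ 0 := by exact_mod_cast hy0.ne'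
      have hdiff : Wc (y:ℂ) - (y:ℂ)*ca = -(2*cb/(y:ℂ)) := by rw [Wc]; ring
      have hbound := F_sub_bound ((y:ℂ)*ca) (Wc (y:ℂ)) ?_
      · calc ‖F (Wc (y:ℂ)) - F ((y:ℂ)*ca)‖ ≤ ‖Wc (y:ℂ) - (y:ℂ)*ca‖ := hbound
          _ = ‖(2*cb : ℂ)‖ * y⁻¹ := by
              rw [hdiff, norm_neg, norm_div]
              rw [Complex.norm_real, Real.norm_eq_abs, abs_of_pos hy0, div_eq_mul_inv]
      · intro t ht
        have hpt : (y:ℂ)*ca + (t:ℂ)*(Wc (y:ℂ) - (y:ℂ)*ca)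
            = ((y:ℝ):ℂ)*ca + ((-2*t/y : ℝ):ℂ)*cb := by
          rw [hdiff]
          push_cast
          field_simp
        rw [hpt, re_comb]
        have e1 : y*(-2*t/y) = -2*t := by field_simp; try ring
        rw [e1]
        nlinarith [ht.1, ht.2, sq_nonneg (-2*t/y), sq_nonneg (y-3)]
    · have := tendsto_inv_atTop_zero (𝕜 := ℝ)
      have h3 := this.const_mul ‖(2*cb : ℂ)‖
      simpa using h3
  have h3 := h1.add h2
  rw [add_zero] at h3
  exact Filter.Tendsto.congr (fun y => by ring) h3

lemma tendsto_FV_top :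
    Tendsto (fun y : ℝ => F (Vc (y:ℂ))) atTop (𝓝 ((Real.sqrt π : ℂ)/2)) := by
  have h1 : Tendsto (fun y : ℝ => F ((y:ℂ) * ca)) atTop (𝓝 ((Real.sqrt π : ℂ)/2)) :=
    tendsto_F_ray ca2_re_pos ca_re_pos
  have h2 : Tendsto (fun y : ℝ => F (Vc (y:ℂ)) - F ((y:ℂ)*ca)) atTop (𝓝 0) := by
    apply squeeze_zero_norm' (a := fun y : ℝ => ‖(2*cb : ℂ)‖ * y⁻¹)
    · filter_upwards [eventually_ge_atTop (3:ℝ)] with y hy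
      have hy0 : (0:ℝ) < y := by linarith
      have hyc : (y:ℂ) ≠ 0 := by exact_mod_cast hy0.ne'
      have hdiff : Vc (y:ℂ) - (y:ℂ)*ca = 2*cb/(y:ℂ) := by rw [Vc]; ring
      have hbound := F_sub_bound ((y:ℂ)*ca) (Vc (y:ℂ)) ?_
      · calc ‖F (Vc (y:ℂ)) - F ((y:ℂ)*ca)‖ ≤ ‖Vc (y:ℂ) - (y:ℂ)*ca‖ := hbound
          _ = ‖(2*cb : ℂ)‖ * y⁻¹ := by
              rw [hdiff, norm_div]
              rw [Complex.norm_real, Real.norm_eq_abs, abs_of_pos hy0, div_eq_mul_inv]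
      · intro t ht
        have hpt : (y:ℂ)*ca + (t:ℂ)*(Vc (y:ℂ) - (y:ℂ)*ca)
            = ((y:ℝ):ℂ)*ca + ((2*t/y : ℝ):ℂ)*cb := by
          rw [hdiff]
          push_cast
          field_simp
        rw [hpt, re_comb]
        have e1 : y*(2*t/y) = 2*t := by field_simp; try ring
        rw [e1]
        nlinarith [ht.1, ht.2, sq_nonneg (2*t/y), sq_nonneg (y-3)]
    · have := tendsto_inv_atTop_zero (𝕜 := ℝ)
      have h3 := this.const_mul ‖(2*cb : ℂ)‖
      simpa using h3
  have h3 := h1.add h2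
  rw [add_zero] at h3
  exact Filter.Tendsto.congr (fun y => by ring) h3

lemma htwo_div : Tendsto (fun y : ℝ => 2/y) (𝓝[>] (0:ℝ)) atTop := by
  have h1 : Tendsto (fun y : ℝ => y⁻¹) (𝓝[>] (0:ℝ)) atTop := tendsto_inv_nhdsGT_zero
  have := h1.const_mul_atTop (by norm_num : (0:ℝ) < 2)
  simpa [div_eq_mul_inv] using this

lemma tendsto_FW_zero :
    Tendsto (fun y : ℝ => F (Wc (y:ℂ))) (𝓝[>] (0:ℝ)) (𝓝 (-((Real.sqrt π : ℂ)/2))) := by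
  have h1 : Tendsto (fun y : ℝ => F (((2/y : ℝ):ℂ) * cb)) (𝓝[>] (0:ℝ))
      (𝓝 ((Real.sqrt π : ℂ)/2)) :=
    (tendsto_F_ray cb2_re_pos cb_re_pos).comp htwo_div
  have h2 : Tendsto (fun y : ℝ => F (Wc (y:ℂ)) + F (((2/y : ℝ):ℂ) * cb)) (𝓝[>] (0:ℝ)) (𝓝 0) := by
    apply squeeze_zero_norm' (a := fun y : ℝ => ‖ca‖ * y)
    · filter_upwards [Ioc_mem_nhdsGT_of_mem
        (by constructor <;> norm_num : (0:ℝ) ∈ Ico (0:ℝ) (1/2))] with y hy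
      have hy0 : (0:ℝ) < y := hy.1
      have hy2 : y ≤ 1/2 := hy.2
      have hyc : (y:ℂ) ≠ 0 := by exact_mod_cast hy0.ne'
      have hz1 : -((((2/y : ℝ)):ℂ) * cb) = -(2*cb/(y:ℂ)) := by push_cast; ring
      have hdiff : Wc (y:ℂ) - (-((((2/y : ℝ)):ℂ) * cb)) = ca * (y:ℂ) := by
        rw [hz1, Wc]; field_simp; ring
      have hFneg : F (-((((2/y : ℝ)):ℂ) * cb)) = - F ((((2/y : ℝ)):ℂ) * cb) := F_neg _
      have hbound := F_sub_bound (-((((2/y : ℝ)):ℂ) * cb)) (Wc (y:ℂ)) ?_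
      · rw [hFneg, sub_neg_eq_add] at hbound
        calc ‖F (Wc (y:ℂ)) + F ((((2/y : ℝ)):ℂ) * cb)‖ ≤ ‖Wc (y:ℂ) - (-((((2/y : ℝ)):ℂ) * cb))‖ :=
              hbound
          _ = ‖ca‖ * y := by
              rw [hdiff, norm_mul, Complex.norm_real, Real.norm_eq_abs, abs_of_pos hy0]
      · intro t ht
        have hpt : -((((2/y : ℝ)):ℂ) * cb) + (t:ℂ)*(Wc (y:ℂ) - (-((((2/y : ℝ)):ℂ) * cb)))
            = ((t*y : ℝ):ℂ)*ca + ((-(2/y) : ℝ):ℂ)*cb := by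
          rw [hdiff]
          push_cast
          ring
        rw [hpt, re_comb]
        have e1 : (t*y)*(-(2/y)) = -2*t := by field_simp
        rw [e1]
        have h4 : (16:ℝ) ≤ 4/y^2 := by
          rw [le_div_iff₀ (by positivity)]
          nlinarith
        have h5 : (-(2/y))^2 = 4/y^2 := by field_simp; ring
        rw [h5]
        nlinarith [ht.1, ht.2, sq_nonneg (t*y)]
    · have : Tendsto (fun y : ℝ => ‖ca‖ * y) (𝓝 (0:ℝ)) (𝓝 (‖ca‖ * 0)) :=
        (continuous_const.mul continuous_id).tendsto 0
      rw [mul_zero] at this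
      exact this.mono_left nhdsWithin_le_nhds
  have h3 := (h1.neg).add h2
  rw [add_zero] at h3
  refine Filter.Tendsto.congr (fun y => by ring) h3

lemma tendsto_FV_zero :
    Tendsto (fun y : ℝ => F (Vc (y:ℂ))) (𝓝[>] (0:ℝ)) (𝓝 ((Real.sqrt π : ℂ)/2)) := by
  have h1 : Tendsto (fun y : ℝ => F (((2/y : ℝ):ℂ) * cb)) (𝓝[>] (0:ℝ))
      (𝓝 ((Real.sqrt π : ℂ)/2)) :=
    (tendsto_F_ray cb2_re_pos cb_re_pos).comp htwo_div
  have h2 : Tendsto (fun y : ℝ => F (Vc (y:ℂ)) - F (((2/y : ℝ):ℂ) * cb)) (𝓝[>] (0:ℝ)) (𝓝 0) := by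
    apply squeeze_zero_norm' (a := fun y : ℝ => ‖ca‖ * y)
    · filter_upwards [Ioc_mem_nhdsGT_of_mem
        (by constructor <;> norm_num : (0:ℝ) ∈ Ico (0:ℝ) (1/2))] with y hy
      have hy0 : (0:ℝ) < y := hy.1
      have hyc : (y:ℂ) ≠ 0 := by exact_mod_cast hy0.ne'
      have hdiff : Vc (y:ℂ) - (((2/y : ℝ)):ℂ) * cb = ca * (y:ℂ) := by
        rw [Vc]; push_cast; field_simp; ring
      have hbound := F_sub_bound ((((2/y : ℝ)):ℂ) * cb) (Vc (y:ℂ)) ?_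
      · calc ‖F (Vc (y:ℂ)) - F ((((2/y : ℝ)):ℂ) * cb)‖ ≤ ‖Vc (y:ℂ) - (((2/y : ℝ)):ℂ) * cb‖ :=
              hbound
          _ = ‖ca‖ * y := by
              rw [hdiff, norm_mul, Complex.norm_real, Real.norm_eq_abs, abs_of_pos hy0]
      · intro t ht
        have hpt : (((2/y : ℝ)):ℂ) * cb + (t:ℂ)*(Vc (y:ℂ) - (((2/y : ℝ)):ℂ) * cb)
            = ((t*y : ℝ):ℂ)*ca + (((2/y) : ℝ):ℂ)*cb := by
          rw [hdiff]
          push_cast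
          ring
        rw [hpt, re_comb]
        have e1 : (t*y)*(2/y) = 2*t := by field_simp
        rw [e1]
        nlinarith [ht.1, ht.2, sq_nonneg (t*y), sq_nonneg (2/y)]
    · have : Tendsto (fun y : ℝ => ‖ca‖ * y) (𝓝 (0:ℝ)) (𝓝 (‖ca‖ * 0)) :=
        (continuous_const.mul continuous_id).tendsto 0
      rw [mul_zero] at this
      exact this.mono_left nhdsWithin_le_nhds
  have h3 := h1.add h2
  rw [add_zero] at h3
  exact Filter.Tendsto.congr (fun y => by ring) h3

noncomputable def Ptop : ℂ :=
  sc * (AA * Complex.exp (-10) * ((Real.sqrt π : ℂ)/2) + BB * Complex.exp 10 * ((Real.sqrt π : ℂ)/2))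
noncomputable def Pzero : ℂ :=
  sc * (AA * Complex.exp (-10) * (-((Real.sqrt π : ℂ)/2)) + BB * Complex.exp 10 * ((Real.sqrt π : ℂ)/2))

lemma tendsto_Φ_top : Tendsto Φr atTop (𝓝 Ptop) := by
  have h := ((tendsto_FW_top.const_mul (AA * Complex.exp (-10))).add
    ((tendsto_FV_top.const_mul (BB * Complex.exp 10)))).const_mul sc
  exact h

lemma tendsto_Φ_zero : Tendsto Φr (𝓝[>] (0:ℝ)) (𝓝 Pzero) := by
  have h := ((tendsto_FW_zero.const_mul (AA * Complex.exp (-10))).add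
    ((tendsto_FV_zero.const_mul (BB * Complex.exp 10)))).const_mul sc
  exact h

lemma hE (y : ℝ) : ca^2*(y:ℂ)^2 + 4*cb^2/(y:ℂ)^2
    = ((3/2*y^2 + 6/y^2 : ℝ):ℂ) + ((-2*y^2 + 8/y^2 : ℝ):ℂ)*Complex.I := by
  rw [ha2, hb2]
  push_cast
  ring

lemma gr_norm_le {y : ℝ} (hy : 0 < y) : ‖gr y‖ ≤ 3*Real.sqrt 2 * Real.exp (-(3/2) * y^2) := by
  have hfst : (1 - 2/((y:ℝ):ℂ)^2) = ((1 - 2/y^2 : ℝ):ℂ) := by push_cast; ring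
  have h1 : ‖gr y‖ = Real.sqrt 2 * |1-2/y^2| * Real.exp (-(3/2*y^2 + 6/y^2)) := by
    rw [gr, gc, hfst, hE]
    rw [show sc = ((Real.sqrt 2 : ℝ):ℂ) from rfl]
    simp only [norm_mul, Complex.norm_real, Real.norm_eq_abs,
      Complex.norm_exp, _root_.abs_of_nonneg (Real.sqrt_nonneg 2)]
    congr 2
    simp only [Complex.neg_re, Complex.add_re, Complex.ofReal_re, Complex.mul_re,
      Complex.I_re, Complex.I_im, Complex.ofReal_im]
    ring
  rw [h1]
  have key : |1-2/y^2| * Real.exp (-(6/y^2)) ≤ 3 := by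
    have hd : (0:ℝ) ≤ 2/y^2 := by positivity
    have habs : |1-2/y^2| ≤ 1 + 2/y^2 := by
      rw [abs_le]; constructor <;> nlinarith
    have hexp := Real.add_one_le_exp (6/y^2)
    have hexp_pos := Real.exp_pos (6/y^2)
    have h66 : (6:ℝ)/y^2 = 3*(2/y^2) := by ring
    have h6 : 1 + 2/y^2 ≤ 3 * Real.exp (6/y^2) := by linarith
    rw [Real.exp_neg]
    calc |1-2/y^2| * (Real.exp (6/y^2))⁻¹ ≤ (3 * Real.exp (6/y^2)) * (Real.exp (6/y^2))⁻¹ := by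
          apply mul_le_mul_of_nonneg_right _ (by positivity)
          linarith
      _ = 3 := by field_simp
  have hsplit : Real.exp (-(3/2*y^2 + 6/y^2)) = Real.exp (-(3/2)*y^2) * Real.exp (-(6/y^2)) := by
    rw [← Real.exp_add]; congr 1; ring
  rw [hsplit]
  have hnn : (0:ℝ) ≤ Real.sqrt 2 * Real.exp (-(3/2)*y^2) := by positivity
  calc Real.sqrt 2 * |1-2/y^2| * (Real.exp (-(3/2)*y^2) * Real.exp (-(6/y^2)))
      = (Real.sqrt 2 * Real.exp (-(3/2)*y^2)) * (|1-2/y^2| * Real.exp (-(6/y^2))) := by ring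
    _ ≤ (Real.sqrt 2 * Real.exp (-(3/2)*y^2)) * 3 := mul_le_mul_of_nonneg_left key hnn
    _ = 3*Real.sqrt 2 * Real.exp (-(3/2) * y^2) := by ring

lemma gr_contOn : ContinuousOn gr (Ioi (0:ℝ)) := by
  have hne : ∀ y ∈ Ioi (0:ℝ), ((y:ℂ))^2 ≠ 0 := by
    intro y hy
    exact pow_ne_zero 2 (by exact_mod_cast (ne_of_gt hy))
  have hsq : ContinuousOn (fun y : ℝ => ((y:ℂ))^2) (Ioi 0) := by fun_prop
  have h1 : ContinuousOn (fun y : ℝ => 1 - 2/((y:ℝ):ℂ)^2) (Ioi 0) :=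
    continuousOn_const.sub (continuousOn_const.div hsq hne)
  have h2 : ContinuousOn (fun y : ℝ => ca^2*((y:ℝ):ℂ)^2 + 4*cb^2/((y:ℝ):ℂ)^2) (Ioi 0) :=
    (continuousOn_const.mul hsq).add (continuousOn_const.div hsq hne)
  have h3 : ContinuousOn (fun y : ℝ =>
      Complex.exp (-(ca^2*((y:ℝ):ℂ)^2 + 4*cb^2/((y:ℝ):ℂ)^2))) (Ioi 0) :=
    Complex.continuous_exp.comp_continuousOn h2.neg
  exact (continuousOn_const.mul h1).mul h3

lemma gr_integrableOn : IntegrableOn gr (Ioi (0:ℝ)) := by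
  have hbint : Integrable (fun y : ℝ => 3*Real.sqrt 2 * Real.exp (-(3/2) * y^2)) := by
    exact (integrable_exp_neg_mul_sq (by norm_num : (0:ℝ) < 3/2)).const_mul _
  apply Integrable.mono' hbint.integrableOn
    (gr_contOn.aestronglyMeasurable measurableSet_Ioi)
  rw [ae_restrict_iff' measurableSet_Ioi]
  exact ae_of_all _ (fun y hy => gr_norm_le hy)

lemma J_val : ∫ y in Ioi (0:ℝ), gr y = Ptop - Pzero := by
  have hIoi : ∫ y in Ioi (1:ℝ), gr y = Ptop - Φr 1 := by
    refine integral_Ioi_of_hasDerivAt_of_tendsto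
      ((Φr_hasDerivAt one_pos).continuousAt.continuousWithinAt)
      (fun x hx => Φr_hasDerivAt (zero_lt_one.trans hx))
      (gr_integrableOn.mono_set (Ioi_subset_Ioi zero_le_one)) tendsto_Φ_top
  set f0 : ℝ → ℂ := fun y => if y ≤ 0 then Pzero else Φr y with hf0
  have hf0pos : ∀ y : ℝ, 0 < y → f0 y = Φr y := by
    intro y hy; simp [hf0, not_le.mpr hy]
  have hIoc : ∫ y in Ioc (0:ℝ) 1, gr y = Φr 1 - Pzero := by
    have hconton : ContinuousOn f0 (Icc (0:ℝ) 1) := by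
      intro x hx
      rcases eq_or_lt_of_le hx.1 with h0 | h0
      · subst h0
        have h1 : Tendsto f0 (𝓝[>] (0:ℝ)) (𝓝 Pzero) := by
          apply tendsto_Φ_zero.congr'
          filter_upwards [self_mem_nhdsWithin] with y hy
          exact (hf0pos y hy).symm
        have h2 : ContinuousWithinAt f0 (Ioi (0:ℝ)) 0 := by
          have : f0 0 = Pzero := by simp [hf0]
          unfold ContinuousWithinAt
          rw [this]
          exact h1
        have h3 : ContinuousWithinAt f0 (insert (0:ℝ) (Ioi 0)) 0 :=
          h2.insert -- may need adjusting
        exact h3.mono (fun y hy => by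
          rcases eq_or_lt_of_le hy.1 with h | h
          · exact Or.inl h.symm
          · exact Or.inr h)
      · have : ContinuousAt f0 x := by
          have hΦ : ContinuousAt Φr x := (Φr_hasDerivAt h0).continuousAt
          apply hΦ.congr
          filter_upwards [Ioi_mem_nhds h0] with y hy
          exact (hf0pos y hy).symm
        exact this.continuousWithinAt
    have hderiv : ∀ x ∈ Ioo (0:ℝ) 1, HasDerivWithinAt f0 (gr x) (Ioi x) x := by
      intro x hx
      apply ((Φr_hasDerivAt hx.1).hasDerivWithinAt).congr
      · intro y hy
        exact hf0pos y (hx.1.trans hy)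
      · exact hf0pos x hx.1
    have hint : IntervalIntegrable gr volume 0 1 := by
      rw [intervalIntegrable_iff_integrableOn_Ioc_of_le zero_le_one]
      exact gr_integrableOn.mono_set Ioc_subset_Ioi_self
    have heq := intervalIntegral.integral_eq_sub_of_hasDeriv_right_of_le zero_le_one
      hconton hderiv hint
    rw [intervalIntegral.integral_of_le zero_le_one] at heq
    rw [heq, hf0pos 1 one_pos]
    congr 1
    simp [hf0]
  have hsplit : Ioc (0:ℝ) 1 ∪ Ioi (1:ℝ) = Ioi (0:ℝ) := Ioc_union_Ioi_eq_Ioi zero_le_one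
  rw [← hsplit, setIntegral_union (Ioc_disjoint_Ioi le_rfl) measurableSet_Ioi
    (gr_integrableOn.mono_set (by rw [← hsplit]; exact subset_union_left))
    (gr_integrableOn.mono_set (by rw [← hsplit]; exact subset_union_right))]
  rw [hIoc, hIoi]
  ring

lemma J_eq : ∫ y in Ioi (0:ℝ), gr y = ((2/5*Real.sqrt π*Real.exp (-10) : ℝ):ℂ)*Complex.I := by
  rw [J_val]
  have hba : cb - ca = 2*sc⁻¹*Complex.I := by rw [ca, cb]; ring
  have hexp : Complex.exp (-(10:ℂ)) = ((Real.exp (-10) : ℝ):ℂ) := by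
    rw [Complex.ofReal_exp]
    push_cast
    ring_nf
  have key : Ptop - Pzero = sc * sc⁻¹ * ((2:ℂ)/5) * Complex.exp (-10) * ((Real.sqrt π:ℝ):ℂ) * Complex.I := by
    rw [Ptop, Pzero, AA, hba]; ring
  rw [key, mul_inv_cancel₀ hs0, hexp]
  push_cast
  ring

noncomputable def φ : ℝ → ℝ := fun y => (y^2 - 4/y^2)/2
noncomputable def φd : ℝ → ℝ := fun y => y + 4/y^3
noncomputable def ff : ℝ → ℝ := fun x =>
  Real.sqrt (Real.sqrt (x^2 + 4) - 2) / Real.sqrt (x^2 + 4)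
    * Real.sin (4 * x) * Real.exp (-3 * Real.sqrt (x^2 + 4))

lemma φ_hasDerivAt {y : ℝ} (hy : y ≠ 0) : HasDerivAt φ (φd y) y := by
  have h1 : HasDerivAt (fun y : ℝ => y^2) (2*y) y := by
    simpa using hasDerivAt_pow 2 y
  have h2 : HasDerivAt (fun y : ℝ => (y^2)⁻¹) (-(2*y)/(y^2)^2) y :=
    h1.inv (pow_ne_zero 2 hy)
  have h3 := (h1.sub (h2.const_mul 4)).div_const 2
  have : φ = fun y : ℝ => (y^2 - 4*(y^2)⁻¹)/2 := by
    funext t; rw [φ]; ring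
  rw [this, φd]
  refine h3.congr_deriv ?_
  field_simp
  ring

lemma u_eq {y : ℝ} (hy : 0 < y) : Real.sqrt ((φ y)^2 + 4) = (y^2 + 4/y^2)/2 := by
  have h : (φ y)^2 + 4 = ((y^2+4/y^2)/2)^2 := by rw [φ]; field_simp; ring
  rw [h, Real.sqrt_sq (by positivity)]

lemma sqrt_sub_two {y : ℝ} (hy : 0 < y) :
    Real.sqrt ((y^2+4/y^2)/2 - 2) = |y^2-2|/(Real.sqrt 2 * y) := by
  have hs2 : (Real.sqrt 2)^2 = 2 := Real.sq_sqrt (by norm_num)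
  have h : (y^2+4/y^2)/2 - 2 = (|y^2-2|/(Real.sqrt 2*y))^2 := by
    rw [div_pow, mul_pow, _root_.sq_abs, hs2]
    have hy2 : (2:ℝ)*y^2 ≠ 0 := by positivity
    field_simp
    ring
  rw [h, Real.sqrt_sq (by positivity)]

lemma im_gr {y : ℝ} (hy : 0 < y) :
    (gr y).im = Real.sqrt 2 * (1-2/y^2) * (Real.exp (-(3/2*y^2+6/y^2)) * Real.sin (2*y^2-8/y^2)) := by
  have hfst : (1 - 2/((y:ℝ):ℂ)^2) = ((1 - 2/y^2 : ℝ):ℂ) := by push_cast; ring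
  have harg : -(((3/2*y^2 + 6/y^2 : ℝ):ℂ) + ((-2*y^2 + 8/y^2 : ℝ):ℂ)*Complex.I)
      = ((-(3/2*y^2+6/y^2) : ℝ):ℂ) + ((2*y^2-8/y^2 : ℝ):ℂ)*Complex.I := by
    push_cast; ring
  rw [gr, gc, hfst, hE, harg]
  rw [show sc = ((Real.sqrt 2 : ℝ):ℂ) from rfl]
  rw [← Complex.ofReal_mul]
  rw [Complex.im_ofReal_mul]
  rw [Complex.exp_im]
  simp only [Complex.add_re, Complex.add_im, Complex.ofReal_re, Complex.ofReal_im,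
    Complex.mul_re, Complex.mul_im, Complex.I_re, Complex.I_im]
  norm_num

lemma φd_pos {y : ℝ} (hy : 0 < y) : 0 < φd y := by
  rw [φd]; positivity

lemma ptwise_high {y : ℝ} (hy : Real.sqrt 2 < y) : |φd y| • ff (φ y) = (gr y).im := by
  have h20 : (0:ℝ) < Real.sqrt 2 := by positivity
  have hy0 : 0 < y := h20.trans hy
  have hs2 : (Real.sqrt 2)^2 = 2 := Real.sq_sqrt (by norm_num)
  have hy2 : 2 < y^2 := by nlinarith [Real.sqrt_nonneg 2]
  have habs : |y^2 - 2| = y^2 - 2 := abs_of_pos (by linarith)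
  have hu : Real.sqrt ((φ y)^2 + 4) = (y^2 + 4/y^2)/2 := u_eq hy0
  rw [smul_eq_mul, abs_of_pos (φd_pos hy0), im_gr hy0, ff]
  rw [hu, sqrt_sub_two hy0, habs]
  have hsin : Real.sin (4 * φ y) = Real.sin (2*y^2 - 8/y^2) := by
    congr 1; rw [φ]; field_simp; ring
  have hexp : Real.exp (-3 * ((y^2+4/y^2)/2)) = Real.exp (-(3/2*y^2+6/y^2)) := by
    congr 1; field_simp; ring
  rw [hsin, hexp, φd]
  have hsne : Real.sqrt 2 ≠ 0 := by positivity
  have hyne : y ≠ 0 := ne_of_gt hy0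
  have hcoef : (y + 4/y^3) * ((y^2-2)/(Real.sqrt 2*y) / ((y^2+4/y^2)/2))
      = Real.sqrt 2*(1-2/y^2) := by
    field_simp
    linear_combination (2 - y^2)*hs2
  linear_combination (Real.sin (2*y^2-8/y^2) * Real.exp (-(3/2*y^2+6/y^2))) * hcoef

lemma ptwise_low {y : ℝ} (hy0 : 0 < y) (hy : y < Real.sqrt 2) :
    |φd y| • ff (φ y) = -(gr y).im := by
  have hs2 : (Real.sqrt 2)^2 = 2 := Real.sq_sqrt (by norm_num)
  have hy2 : y^2 < 2 := by nlinarith [Real.sqrt_nonneg 2]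
  have habs : |y^2 - 2| = 2 - y^2 := by rw [abs_of_neg (by linarith)]; ring
  have hu : Real.sqrt ((φ y)^2 + 4) = (y^2 + 4/y^2)/2 := u_eq hy0
  rw [smul_eq_mul, abs_of_pos (φd_pos hy0), im_gr hy0, ff]
  rw [hu, sqrt_sub_two hy0, habs]
  have hsin : Real.sin (4 * φ y) = Real.sin (2*y^2 - 8/y^2) := by
    congr 1; rw [φ]; field_simp; ring
  have hexp : Real.exp (-3 * ((y^2+4/y^2)/2)) = Real.exp (-(3/2*y^2+6/y^2)) := by
    congr 1; field_simp; ring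
  rw [hsin, hexp, φd]
  have hsne : Real.sqrt 2 ≠ 0 := by positivity
  have hyne : y ≠ 0 := ne_of_gt hy0
  have hcoef : (y + 4/y^3) * ((2-y^2)/(Real.sqrt 2*y) / ((y^2+4/y^2)/2))
      = -(Real.sqrt 2*(1-2/y^2)) := by
    field_simp
    linear_combination (y^2 - 2)*hs2
  linear_combination (Real.sin (2*y^2-8/y^2) * Real.exp (-(3/2*y^2+6/y^2))) * hcoef

lemma sqrt2_pos : (0:ℝ) < Real.sqrt 2 := by positivity

lemma himg1 : φ '' (Ioi (Real.sqrt 2)) = Ioi (0:ℝ) := by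
  have hs2 : (Real.sqrt 2)^2 = 2 := Real.sq_sqrt (by norm_num)
  apply Subset.antisymm
  · rintro x ⟨y, hy, rfl⟩
    simp only [mem_Ioi] at hy ⊢
    have hy0 : 0 < y := sqrt2_pos.trans hy
    have hy2 : 2 < y^2 := by nlinarith [Real.sqrt_nonneg 2]
    have h4 : 4/y^2 < y^2 := by
      rw [div_lt_iff₀ (by positivity)]
      nlinarith
    rw [φ]
    linarith
  · intro x hx
    simp only [mem_Ioi] at hx
    set u := Real.sqrt (x^2+4) with hu
    have hu2 : u^2 = x^2+4 := Real.sq_sqrt (by positivity)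
    have hu0 : 0 ≤ u := Real.sqrt_nonneg _
    have h2u : 2 < u := by nlinarith
    have ht : 0 < x + u := by linarith
    have ht2 : 2 < x + u := by linarith
    refine ⟨Real.sqrt (x+u), ?_, ?_⟩
    · simp only [mem_Ioi]
      exact Real.sqrt_lt_sqrt (by norm_num) ht2
    · have hy2 : (Real.sqrt (x+u))^2 = x+u := Real.sq_sqrt ht.le
      rw [φ, hy2]
      have hne : x + u ≠ 0 := ne_of_gt ht
      field_simp
      linear_combination hu2

lemma himg2 : φ '' (Ioo (0:ℝ) (Real.sqrt 2)) = Iio (0:ℝ) := by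
  have hs2 : (Real.sqrt 2)^2 = 2 := Real.sq_sqrt (by norm_num)
  apply Subset.antisymm
  · rintro x ⟨y, hy, rfl⟩
    simp only [mem_Iio]
    have hy0 : 0 < y := hy.1
    have hy2 : y^2 < 2 := by nlinarith [Real.sqrt_nonneg 2, hy.2]
    have h4 : y^2 < 4/y^2 := by
      rw [lt_div_iff₀ (by positivity)]
      nlinarith
    rw [φ]
    linarith
  · intro x hx
    simp only [mem_Iio] at hx
    set u := Real.sqrt (x^2+4) with hu
    have hu2 : u^2 = x^2+4 := Real.sq_sqrt (by positivity)
    have hu0 : 0 ≤ u := Real.sqrt_nonneg _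
    have hxu : -x < u := by nlinarith
    have ht : 0 < x + u := by linarith
    have ht2 : x + u < 2 := by nlinarith
    refine ⟨Real.sqrt (x+u), ⟨?_, ?_⟩, ?_⟩
    · exact Real.sqrt_pos.mpr ht
    · exact Real.sqrt_lt_sqrt ht.le ht2
    · have hy2 : (Real.sqrt (x+u))^2 = x+u := Real.sq_sqrt ht.le
      rw [φ, hy2]
      have hne : x + u ≠ 0 := ne_of_gt ht
      field_simp
      linear_combination hu2

lemma hmono : StrictMonoOn φ (Ioi (0:ℝ)) := by
  intro a ha b hb hab
  simp only [mem_Ioi] at ha hb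
  have h1 : a^2 < b^2 := by nlinarith
  have h2 : 4/b^2 < 4/a^2 :=
    div_lt_div_of_pos_left (by norm_num) (by positivity) h1
  simp only [φ]
  linarith

lemma hCoV1 : ∫ x in Ioi (0:ℝ), ff x = ∫ y in Ioi (Real.sqrt 2), |φd y| • ff (φ y) := by
  rw [← himg1]
  exact integral_image_eq_integral_abs_deriv_smul measurableSet_Ioi
    (fun y hy => (φ_hasDerivAt (ne_of_gt (sqrt2_pos.trans hy))).hasDerivWithinAt)
    ((hmono.mono (Ioi_subset_Ioi sqrt2_pos.le)).injOn) ff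

lemma hCoV2 : ∫ x in Iio (0:ℝ), ff x = ∫ y in Ioo (0:ℝ) (Real.sqrt 2), |φd y| • ff (φ y) := by
  rw [← himg2]
  exact integral_image_eq_integral_abs_deriv_smul measurableSet_Ioo
    (fun y hy => (φ_hasDerivAt (ne_of_gt hy.1)).hasDerivWithinAt)
    ((hmono.mono (fun y hy => hy.1)).injOn) ff

lemma hIio_eq : ∫ x in Iio (0:ℝ), ff x = - ∫ x in Ioi (0:ℝ), ff x := by
  have hodd : ∀ x:ℝ, ff (-x) = - ff x := by
    intro x
    simp only [ff]
    rw [show ((-x)^2 : ℝ) = x^2 by ring, show (4*(-x) : ℝ) = -(4*x) by ring, Real.sin_neg]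
    ring
  have h1 := integral_comp_neg_Ioi (0:ℝ) ff
  rw [neg_zero] at h1
  calc ∫ x in Iio (0:ℝ), ff x = ∫ x in Iic (0:ℝ), ff x := integral_Iic_eq_integral_Iio.symm
    _ = ∫ x in Ioi (0:ℝ), ff (-x) := h1.symm
    _ = ∫ x in Ioi (0:ℝ), (- ff x) := by
        have : (fun x => ff (-x)) = fun x => - ff x := funext hodd
        rw [this]
    _ = - ∫ x in Ioi (0:ℝ), ff x := MeasureTheory.integral_neg ff

lemma main_core : ∫ x in Ioi (0:ℝ), ff x = Real.sqrt π / (5 * Real.exp 10) := by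
  have him := integral_im (μ := (volume : Measure ℝ).restrict (Ioi 0)) gr_integrableOn
  have him' : ∫ y in Ioi (0:ℝ), (gr y).im = (∫ y in Ioi (0:ℝ), gr y).im := by
    simpa using him
  have hint_im : IntegrableOn (fun y => (gr y).im) (Ioi (0:ℝ)) := gr_integrableOn.im
  have hsplit : Ioc (0:ℝ) (Real.sqrt 2) ∪ Ioi (Real.sqrt 2) = Ioi (0:ℝ) :=
    Ioc_union_Ioi_eq_Ioi sqrt2_pos.le
  have hsum : ∫ y in Ioi (0:ℝ), (gr y).im
      = (∫ y in Ioc (0:ℝ) (Real.sqrt 2), (gr y).im) + ∫ y in Ioi (Real.sqrt 2), (gr y).im := by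
    rw [← hsplit, setIntegral_union (Ioc_disjoint_Ioi le_rfl) measurableSet_Ioi
      (hint_im.mono_set (by rw [← hsplit]; exact subset_union_left))
      (hint_im.mono_set (by rw [← hsplit]; exact subset_union_right))]
  have hlow : ∫ y in Ioc (0:ℝ) (Real.sqrt 2), (gr y).im = ∫ x in Ioi (0:ℝ), ff x := by
    rw [integral_Ioc_eq_integral_Ioo]
    have : ∫ y in Ioo (0:ℝ) (Real.sqrt 2), (gr y).im
        = ∫ y in Ioo (0:ℝ) (Real.sqrt 2), -(|φd y| • ff (φ y)) := by
      apply setIntegral_congr_fun measurableSet_Ioo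
      intro y hy
      show (gr y).im = -(|φd y| • ff (φ y))
      rw [ptwise_low hy.1 hy.2]
      ring
    rw [this, MeasureTheory.integral_neg, ← hCoV2, hIio_eq, neg_neg]
  have hhigh : ∫ y in Ioi (Real.sqrt 2), (gr y).im = ∫ x in Ioi (0:ℝ), ff x := by
    have : ∫ y in Ioi (Real.sqrt 2), (gr y).im
        = ∫ y in Ioi (Real.sqrt 2), |φd y| • ff (φ y) := by
      apply setIntegral_congr_fun measurableSet_Ioi
      intro y hy
      show (gr y).im = |φd y| • ff (φ y)
      rw [ptwise_high hy]
    rw [this, ← hCoV1]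
  have hJim : (∫ y in Ioi (0:ℝ), gr y).im = 2/5*Real.sqrt π*Real.exp (-10) := by
    rw [J_eq, Complex.im_ofReal_mul, Complex.I_im, mul_one]
  have h2I : 2 * (∫ x in Ioi (0:ℝ), ff x) = 2/5*Real.sqrt π*Real.exp (-10) := by
    rw [← hJim, ← him', hsum, hlow, hhigh]
    ring
  have hexp : Real.exp (-10) = (Real.exp 10)⁻¹ := Real.exp_neg 10
  rw [hexp] at h2I
  have hepos : (0:ℝ) < Real.exp 10 := Real.exp_pos 10
  have hne : Real.exp 10 ≠ 0 := ne_of_gt hepos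
  rw [eq_div_iff (by positivity : (5:ℝ)*Real.exp 10 ≠ 0)]
  field_simp at h2I ⊢
  linarith [h2I]

theorem stmt16 :
    ∫ x in Set.Ioi (0:ℝ),
        Real.sqrt (Real.sqrt (x^2 + 4) - 2) / Real.sqrt (x^2 + 4)
          * Real.sin (4 * x) * Real.exp (-3 * Real.sqrt (x^2 + 4))
      = Real.sqrt π / (5 * Real.exp 10) := main_core
end

section
/- For real a ≥ 0 and b > 0, the integral over x from 0 to ∞ of √(√(x²+a²)+a)/(x²+b²) equals (π/b)·√((a+b)/2). -/
open Real MeasureTheory Set Filter Topology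

noncomputable def rr (a x : ℝ) : ℝ := Real.sqrt (x^2 + a^2)
noncomputable def gg (a x : ℝ) : ℝ := Real.sqrt ((rr a x - a)/2)
noncomputable def ffn (a x : ℝ) : ℝ := Real.sqrt ((rr a x + a)/2)
noncomputable def TT (a b x : ℝ) : ℝ :=
  arctan ((ffn a x + Real.sqrt (a+b))/gg a x) - arctan ((ffn a x - Real.sqrt (a+b))/gg a x)
noncomputable def GG (a b x : ℝ) : ℝ :=
  if b ≤ a then Real.sqrt (a-b) * arctan (2 * Real.sqrt (a-b) * gg a x / (2*(gg a x)^2 + b))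
  else (Real.sqrt (b-a)/2) * (Real.log (2*(gg a x)^2 + b - 2*Real.sqrt (b-a)*gg a x)
        - Real.log (2*(gg a x)^2 + b + 2*Real.sqrt (b-a)*gg a x))
noncomputable def FFa (a b x : ℝ) : ℝ :=
  if x = 0 then -(Real.sqrt 2 * Real.sqrt (a+b) * π / (2*b))
  else (Real.sqrt 2/(2*b)) * (GG a b x - Real.sqrt (a+b) * TT a b x)

set_option linter.unusedSectionVars false

section basic
variable {a b x : ℝ} (ha : 0 ≤ a) (hb : 0 < b) (hx : 0 < x)

lemma rr_sq : (rr a x)^2 = x^2 + a^2 := Real.sq_sqrt (by positivity)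

include ha hx in
lemma rr_gt : a < rr a x := by
  have : a = Real.sqrt (a^2) := by rw [Real.sqrt_sq ha]
  rw [this, rr]
  apply Real.sqrt_lt_sqrt (by positivity)
  nlinarith [Real.sq_sqrt (sq_nonneg a)]

include ha hx in
lemma rr_pos : 0 < rr a x := lt_of_le_of_lt ha (rr_gt ha hx)

include ha hx in
lemma gg_sq : (gg a x)^2 = (rr a x - a)/2 := Real.sq_sqrt (by linarith [rr_gt ha hx])

include ha hx in
lemma gg_pos : 0 < gg a x := Real.sqrt_pos.2 (by linarith [rr_gt ha hx])

include ha hx in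
lemma ffn_sq : (ffn a x)^2 = (rr a x + a)/2 := Real.sq_sqrt (by linarith [rr_gt ha hx, rr_pos ha hx])

include ha hx in
lemma ffn_pos : 0 < ffn a x := Real.sqrt_pos.2 (by nlinarith [rr_gt ha hx, rr_pos ha hx])

include ha hx in
lemma x_eq : x = 2 * ffn a x * gg a x := by
  have h1 := ffn_sq ha hx
  have h2 := gg_sq ha hx
  have h3 := rr_sq (a := a) (x := x)
  have h4 := (ffn_pos ha hx).le
  have h5 := (gg_pos ha hx).le
  nlinarith [sq_nonneg (x - 2 * ffn a x * gg a x), sq_nonneg (x + 2 * ffn a x * gg a x), mul_nonneg h4 h5]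

include ha hx in
lemma rr_eq : rr a x = (ffn a x)^2 + (gg a x)^2 := by
  have h1 := ffn_sq ha hx; have h2 := gg_sq ha hx; linarith

include ha hx in
lemma a_eq : a = (ffn a x)^2 - (gg a x)^2 := by
  have h1 := ffn_sq ha hx; have h2 := gg_sq ha hx; linarith

include ha hx in
lemma hasDerivAt_rr : HasDerivAt (rr a) (x / rr a x) x := by
  have h : HasDerivAt (fun y : ℝ => y^2 + a^2) (2*x) x := by
    simpa using ((hasDerivAt_pow 2 x).add_const (a^2))
  have h2 := h.sqrt (by positivity)
  convert h2 using 1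
  have hr : rr a x ≠ 0 := (rr_pos ha hx).ne'
  show x / rr a x = 2 * x / (2 * rr a x)
  field_simp
  ring
  rfl

include ha hx in
lemma hasDerivAt_gg : HasDerivAt (gg a) (x / (4 * rr a x * gg a x)) x := by
  have h : HasDerivAt (fun y => (rr a y - a)/2) ((x / rr a x)/2) x :=
    ((hasDerivAt_rr ha hx).sub_const a).div_const 2
  have hne : (rr a x - a)/2 ≠ 0 := ne_of_gt (by linarith [rr_gt ha hx])
  have h2 := h.sqrt hne
  convert h2 using 1
  have hg := (gg_pos ha hx).ne'
  have hr := (rr_pos ha hx).ne'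
  show x / (4 * rr a x * gg a x) = x / rr a x / 2 / (2 * gg a x)
  rw [div_div, div_div]
  congr 1
  ring
  rfl

include ha hx in
lemma hasDerivAt_ffn : HasDerivAt (ffn a) (x / (4 * rr a x * ffn a x)) x := by
  have h : HasDerivAt (fun y => (rr a y + a)/2) ((x / rr a x)/2) x :=
    ((hasDerivAt_rr ha hx).add_const a).div_const 2
  have hne : (rr a x + a)/2 ≠ 0 := ne_of_gt (by linarith [rr_gt ha hx, rr_pos ha hx])
  have h2 := h.sqrt hne
  convert h2 using 1
  have hg := (ffn_pos ha hx).ne'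
  have hr := (rr_pos ha hx).ne'
  show x / (4 * rr a x * ffn a x) = x / rr a x / 2 / (2 * ffn a x)
  rw [div_div, div_div]
  congr 1
  ring
  rfl

include ha hb hx in
lemma hasDerivAt_TT :
    HasDerivAt (TT a b)
      (Real.sqrt (a+b) * ffn a x * (a - b - rr a x) / (rr a x * (x^2+b^2))) x := by
  have hG := gg_pos ha hx
  have hF := ffn_pos ha hx
  have hR := rr_pos ha hx
  have hGne := hG.ne'
  have hβ : (Real.sqrt (a+b))^2 = a + b := Real.sq_sqrt (by linarith)
  have hp : HasDerivAt (fun y => (ffn a y + Real.sqrt (a+b))/gg a y)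
      ((x / (4 * rr a x * ffn a x) * gg a x - (ffn a x + Real.sqrt (a+b)) * (x / (4 * rr a x * gg a x))) / (gg a x)^2) x :=
    ((hasDerivAt_ffn ha hx).add_const _).div (hasDerivAt_gg ha hx) hGne
  have hq : HasDerivAt (fun y => (ffn a y - Real.sqrt (a+b))/gg a y)
      ((x / (4 * rr a x * ffn a x) * gg a x - (ffn a x - Real.sqrt (a+b)) * (x / (4 * rr a x * gg a x))) / (gg a x)^2) x :=
    ((hasDerivAt_ffn ha hx).sub_const _).div (hasDerivAt_gg ha hx) hGne
  have hD := (hp.arctan).sub (hq.arctan)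
  refine hD.congr_deriv ?_
  set R := rr a x with hRdef
  set F := ffn a x with hFdef
  set G := gg a x with hGdef
  set β := Real.sqrt (a+b) with hβdef
  have e1 : a = F^2 - G^2 := a_eq ha hx
  have e2 : R = F^2 + G^2 := rr_eq ha hx
  have e3 : x = 2 * F * G := x_eq ha hx
  have e4 : b = β^2 - F^2 + G^2 := by rw [e1] at hβ; linarith
  have hFne : F ≠ 0 := hF.ne'
  have hd1 : G^2 + (F+β)^2 ≠ 0 := by positivity
  have hd2 : G^2 + (F-β)^2 ≠ 0 := by positivity
  have hden : R * (x^2+b^2) ≠ 0 := by positivity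
  rw [e3, e4, e2] at hden
  rw [e1, e3, e4, e2]
  field_simp at hden ⊢
  ring

include ha hb hx in
lemma hasDerivAt_GG :
    HasDerivAt (GG a b)
      ((a - b) * ffn a x * (a + b - rr a x) / (rr a x * (x^2+b^2))) x := by
  have hG := gg_pos ha hx
  have hF := ffn_pos ha hx
  have hR := rr_pos ha hx
  have hGne := hG.ne'
  have hFne := hF.ne'
  have hRne := hR.ne'
  have hmpos : ∀ y : ℝ, (0:ℝ) < 2*(gg a y)^2 + b := fun y => by positivity
  rcases le_or_gt b a with hba | hba
  · have hα : (Real.sqrt (a-b))^2 = a - b := Real.sq_sqrt (by linarith)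
    set α := Real.sqrt (a-b) with hαdef
    have hGGeq : GG a b = fun y => α * arctan (2 * α * gg a y / (2*(gg a y)^2 + b)) := by
      funext y; simp only [GG, if_pos hba, hαdef]
    rw [hGGeq]
    have hnum : HasDerivAt (fun y => 2 * α * gg a y) (2 * α * (x / (4 * rr a x * gg a x))) x :=
      (hasDerivAt_gg ha hx).const_mul _
    have hden : HasDerivAt (fun y => 2*(gg a y)^2 + b) (2 * (2 * gg a x * (x / (4 * rr a x * gg a x)))) x := by
      have h2 : HasDerivAt (fun y => (gg a y)^2) (2 * gg a x * (x / (4 * rr a x * gg a x))) x := by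
        simpa [mul_comm] using ((hasDerivAt_gg ha hx).fun_pow 2)
      exact (h2.const_mul 2).add_const b
    have hquot := hnum.div hden (hmpos x).ne'
    have hD := (hquot.arctan).const_mul α
    refine hD.congr_deriv ?_
    simp only [Pi.div_apply]
    set R := rr a x
    set F := ffn a x
    set G := gg a x
    have e1 : a = F^2 - G^2 := a_eq ha hx
    have e2 : R = F^2 + G^2 := rr_eq ha hx
    have e3 : x = 2 * F * G := x_eq ha hx
    have e4 : b = F^2 - G^2 - α^2 := by rw [e1] at hα; linarith
    have hq1 : (2*G^2+b) ≠ 0 := (hmpos x).ne'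
    have hq2 : (1 + (2*α*G/(2*G^2+b))^2) ≠ 0 := by positivity
    have hden0 : R * (x^2+b^2) ≠ 0 := by positivity
    simp only [e1, e3, e4, e2] at hden0 hq1 hq2 ⊢
    field_simp at hden0 hq1 hq2 ⊢
    ring
  · have hα : (Real.sqrt (b-a))^2 = b - a := Real.sq_sqrt (by linarith)
    have hαnn : 0 ≤ Real.sqrt (b-a) := Real.sqrt_nonneg _
    set α := Real.sqrt (b-a) with hαdef
    have hGGeq : GG a b = fun y => (α/2) * (Real.log (2*(gg a y)^2 + b - 2*α*gg a y)
        - Real.log (2*(gg a y)^2 + b + 2*α*gg a y)) := by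
      funext y; simp only [GG, if_neg (not_le.2 hba), hαdef]
    rw [hGGeq]
    have hm1 : ∀ y : ℝ, (0:ℝ) < 2*(gg a y)^2 + b - 2*α*gg a y := by
      intro y
      nlinarith [sq_nonneg (2 * gg a y - α)]
    have hm2 : ∀ y : ℝ, (0:ℝ) < 2*(gg a y)^2 + b + 2*α*gg a y := by
      intro y
      nlinarith [sq_nonneg (2 * gg a y + α)]
    have hg2 : HasDerivAt (fun y => (gg a y)^2) (2 * gg a x * (x / (4 * rr a x * gg a x))) x := by
      simpa [mul_comm] using ((hasDerivAt_gg ha hx).fun_pow 2)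
    have hin1 : HasDerivAt (fun y => 2*(gg a y)^2 + b - 2*α*gg a y)
        (2 * (2 * gg a x * (x / (4 * rr a x * gg a x))) - 2*α*(x / (4 * rr a x * gg a x))) x :=
      ((hg2.const_mul 2).add_const b).sub ((hasDerivAt_gg ha hx).const_mul (2*α))
    have hin2 : HasDerivAt (fun y => 2*(gg a y)^2 + b + 2*α*gg a y)
        (2 * (2 * gg a x * (x / (4 * rr a x * gg a x))) + 2*α*(x / (4 * rr a x * gg a x))) x :=
      ((hg2.const_mul 2).add_const b).add ((hasDerivAt_gg ha hx).const_mul (2*α))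
    have hlog1 := hin1.log (hm1 x).ne'
    have hlog2 := hin2.log (hm2 x).ne'
    have hD := (hlog1.sub hlog2).const_mul (α/2)
    refine hD.congr_deriv ?_
    set R := rr a x
    set F := ffn a x
    set G := gg a x
    have e1 : a = F^2 - G^2 := a_eq ha hx
    have e2 : R = F^2 + G^2 := rr_eq ha hx
    have e3 : x = 2 * F * G := x_eq ha hx
    have e4 : b = F^2 - G^2 + α^2 := by rw [e1] at hα; linarith
    have hq1 : (2*G^2 + b - 2*α*G) ≠ 0 := (hm1 x).ne'
    have hq2 : (2*G^2 + b + 2*α*G) ≠ 0 := (hm2 x).ne'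
    have hden0 : R * (x^2+b^2) ≠ 0 := by positivity
    simp only [e1, e3, e4, e2] at hden0 hq1 hq2 ⊢
    field_simp at hden0 hq1 hq2 ⊢
    ring

end basic

lemma tendsto_sqrt_atTop : Tendsto Real.sqrt atTop atTop := by
  apply tendsto_atTop_atTop.2
  intro c
  refine ⟨max (c^2) 0, fun x hx => ?_⟩
  calc c ≤ |c| := le_abs_self c
    _ = Real.sqrt (c^2) := (Real.sqrt_sq_eq_abs c).symm
    _ ≤ Real.sqrt x := Real.sqrt_le_sqrt (le_trans (le_max_left _ _) hx)

section lims
variable {a b : ℝ} (ha : 0 ≤ a) (hb : 0 < b)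

lemma rr_ge_self (x : ℝ) : x ≤ rr a x := by
  rcases le_or_gt x 0 with h | h
  · exact le_trans h (Real.sqrt_nonneg _)
  · calc x = Real.sqrt (x^2) := (Real.sqrt_sq h.le).symm
      _ ≤ rr a x := Real.sqrt_le_sqrt (by nlinarith)

lemma tendsto_rr_atTop : Tendsto (rr a) atTop atTop :=
  tendsto_atTop_mono rr_ge_self tendsto_id

include ha in
lemma tendsto_gg_atTop : Tendsto (gg a) atTop atTop := by
  have h : Tendsto (fun x => (rr a x - a)/2) atTop atTop :=
    (tendsto_atTop_add_const_right _ (-a) tendsto_rr_atTop).atTop_div_const two_pos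
  exact _root_.tendsto_sqrt_atTop.comp h

lemma continuous_rr : Continuous (rr a) := by
  apply Real.continuous_sqrt.comp; continuity

lemma continuous_gg : Continuous (gg a) := by
  apply Real.continuous_sqrt.comp; exact ((continuous_rr).sub continuous_const).div_const 2

lemma continuous_ffn : Continuous (ffn a) := by
  apply Real.continuous_sqrt.comp; exact ((continuous_rr).add continuous_const).div_const 2

include ha in
lemma rr_at_zero : rr a 0 = a := by
  simp [rr, Real.sqrt_sq ha]

include ha in
lemma gg_at_zero : gg a 0 = 0 := by simp [gg, rr_at_zero ha]

include ha in
lemma ffn_at_zero : ffn a 0 = Real.sqrt a := by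
  rw [ffn, rr_at_zero ha]
  congr 1
  ring

include ha in
lemma tendsto_ffn_div_gg : Tendsto (fun x => ffn a x / gg a x) atTop (𝓝 1) := by
  have h1 : Tendsto (fun x => (rr a x + a) / (rr a x - a)) atTop (𝓝 1) := by
    have hz : Tendsto (fun x : ℝ => a / x) atTop (𝓝 0) :=
      Tendsto.div_atTop tendsto_const_nhds tendsto_id
    have hnum : Tendsto (fun x : ℝ => 1 + a / x) atTop (𝓝 1) := by
      simpa using (tendsto_const_nhds (x := (1:ℝ))).add hz
    have hden : Tendsto (fun x : ℝ => 1 - a / x) atTop (𝓝 1) := by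
      simpa using (tendsto_const_nhds (x := (1:ℝ))).sub hz
    have h2 : Tendsto (fun x : ℝ => (1 + a / x) / (1 - a / x)) atTop (𝓝 1) := by
      have := hnum.div hden one_ne_zero
      rwa [div_one] at this
    have h3 := h2.comp (tendsto_rr_atTop (a := a))
    apply h3.congr'
    filter_upwards [(tendsto_rr_atTop (a := a)).eventually_gt_atTop 0] with x hx
    have : rr a x ≠ 0 := hx.ne'
    show (1 + a / rr a x) / (1 - a / rr a x) = _
    field_simp
  have h4 : Tendsto (fun x => Real.sqrt ((rr a x + a) / (rr a x - a))) atTop (𝓝 1) := by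
    have := (Real.continuous_sqrt.tendsto 1).comp h1
    rw [Real.sqrt_one] at this
    exact this
  apply h4.congr'
  filter_upwards [(tendsto_rr_atTop (a := a)).eventually_gt_atTop a] with x hx
  rw [ffn, gg, ← Real.sqrt_div (by linarith)]
  congr 1
  have h5 : rr a x - a ≠ 0 := by linarith
  field_simp

include ha in
lemma tendsto_TT_atTop : Tendsto (TT a b) atTop (𝓝 0) := by
  have hinv : Tendsto (fun x => (gg a x)⁻¹) atTop (𝓝 0) :=
    (tendsto_gg_atTop ha).inv_tendsto_atTop
  have hβg : Tendsto (fun x => Real.sqrt (a+b) / gg a x) atTop (𝓝 0) := by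
    simpa [div_eq_mul_inv] using hinv.const_mul (Real.sqrt (a+b))
  have h1 : Tendsto (fun x => (ffn a x + Real.sqrt (a+b)) / gg a x) atTop (𝓝 1) := by
    have h := (tendsto_ffn_div_gg ha).add hβg
    rw [show (1:ℝ) + 0 = 1 by ring] at h
    exact h.congr (fun x => by rw [add_div])
  have h2 : Tendsto (fun x => (ffn a x - Real.sqrt (a+b)) / gg a x) atTop (𝓝 1) := by
    have h := (tendsto_ffn_div_gg ha).sub hβg
    rw [show (1:ℝ) - 0 = 1 by ring] at h
    exact h.congr (fun x => by rw [sub_div])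
  have harc := Real.continuous_arctan.tendsto 1
  have := (harc.comp h1).sub (harc.comp h2)
  exact (by simpa using this : Tendsto (fun x => arctan ((ffn a x + Real.sqrt (a+b)) / gg a x) - arctan ((ffn a x - Real.sqrt (a+b)) / gg a x)) atTop (𝓝 0))

include ha hb in
lemma tendsto_GG_atTop : Tendsto (GG a b) atTop (𝓝 0) := by
  have hinv : Tendsto (fun x => (gg a x)⁻¹) atTop (𝓝 0) :=
    (tendsto_gg_atTop ha).inv_tendsto_atTop
  have hgpos : ∀ᶠ x in atTop, 0 < gg a x := (tendsto_gg_atTop ha).eventually_gt_atTop 0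
  have hsq : Tendsto (fun x => (gg a x)^2 : ℝ → ℝ) atTop atTop := by
    have := (tendsto_gg_atTop ha).atTop_mul_atTop₀ (tendsto_gg_atTop ha)
    exact this.congr (fun x => (sq (gg a x)).symm)
  rcases le_or_gt b a with hba | hba
  · have hGG : GG a b = fun x => Real.sqrt (a-b) * arctan (2 * Real.sqrt (a-b) * gg a x / (2*(gg a x)^2 + b)) := by
      funext y; simp only [GG, if_pos hba]
    rw [hGG]
    set α := Real.sqrt (a-b)
    have harg : Tendsto (fun x => 2 * α * gg a x / (2*(gg a x)^2 + b)) atTop (𝓝 0) := by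
      have hq : Tendsto (fun x => (2 * α / gg a x) / (2 + b / (gg a x)^2)) atTop (𝓝 0) := by
        have hn : Tendsto (fun x => 2 * α / gg a x) atTop (𝓝 0) := by
          simpa [div_eq_mul_inv] using hinv.const_mul (2*α)
        have hd : Tendsto (fun x => 2 + b / (gg a x)^2) atTop (𝓝 2) := by
          have hz : Tendsto (fun x => b / (gg a x)^2) atTop (𝓝 0) :=
            Tendsto.div_atTop tendsto_const_nhds hsq
          simpa using (tendsto_const_nhds (x := (2:ℝ))).add hz
        have := hn.div hd two_ne_zero
        rwa [zero_div] at this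
      apply hq.congr'
      filter_upwards [hgpos] with x hx
      have hg1 : gg a x ≠ 0 := hx.ne'
      have hg2 : 2*(gg a x)^2 + b ≠ 0 := by positivity
      field_simp
    have := ((Real.continuous_arctan.tendsto 0).comp harg).const_mul α
    simpa using this
  · have hGG : GG a b = fun x => (Real.sqrt (b-a)/2) * (Real.log (2*(gg a x)^2 + b - 2*Real.sqrt (b-a)*gg a x)
        - Real.log (2*(gg a x)^2 + b + 2*Real.sqrt (b-a)*gg a x)) := by
      funext y; simp only [GG, if_neg (not_le.2 hba)]
    rw [hGG]
    set α := Real.sqrt (b-a) with hαdef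
    have hα : α^2 = b - a := Real.sq_sqrt (by linarith)
    have hm1 : ∀ y : ℝ, (0:ℝ) < 2*(gg a y)^2 + b - 2*α*gg a y := by
      intro y
      nlinarith [sq_nonneg (2 * gg a y - α)]
    have hm2 : ∀ y : ℝ, (0:ℝ) < 2*(gg a y)^2 + b + 2*α*gg a y := by
      intro y
      nlinarith [sq_nonneg (2 * gg a y + α)]
    have hratio : Tendsto (fun x => (2*(gg a x)^2 + b - 2*α*gg a x) / (2*(gg a x)^2 + b + 2*α*gg a x)) atTop (𝓝 1) := by
      have hq : Tendsto (fun x => (2 + b/(gg a x)^2 - 2*α/gg a x) / (2 + b/(gg a x)^2 + 2*α/gg a x)) atTop (𝓝 1) := by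
        have hz1 : Tendsto (fun x => b / (gg a x)^2) atTop (𝓝 0) := Tendsto.div_atTop tendsto_const_nhds hsq
        have hz2 : Tendsto (fun x => 2*α / gg a x) atTop (𝓝 0) := by
          simpa [div_eq_mul_inv] using hinv.const_mul (2*α)
        have hn : Tendsto (fun x => 2 + b/(gg a x)^2 - 2*α/gg a x) atTop (𝓝 2) := by
          simpa using ((tendsto_const_nhds (x := (2:ℝ))).add hz1).sub hz2
        have hd : Tendsto (fun x => 2 + b/(gg a x)^2 + 2*α/gg a x) atTop (𝓝 2) := by
          simpa using ((tendsto_const_nhds (x := (2:ℝ))).add hz1).add hz2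
        have := hn.div hd two_ne_zero
        rwa [(by norm_num : (2:ℝ) / 2 = 1)] at this
      apply hq.congr'
      filter_upwards [hgpos] with x hx
      have hg1 : gg a x ≠ 0 := hx.ne'
      have hg2 : 2*(gg a x)^2 + b + 2*α*gg a x ≠ 0 := (hm2 x).ne'
      field_simp
    have hlog : Tendsto (fun x => Real.log ((2*(gg a x)^2 + b - 2*α*gg a x) / (2*(gg a x)^2 + b + 2*α*gg a x))) atTop (𝓝 0) := by
      have := (Real.continuousAt_log one_ne_zero).tendsto.comp hratio
      rw [Real.log_one] at this
      exact this
    have hfin := hlog.const_mul (α/2)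
    rw [mul_zero] at hfin
    apply hfin.congr
    intro x
    rw [Real.log_div (hm1 x).ne' (hm2 x).ne']

include ha hb in
lemma tendsto_TT_zero : Tendsto (TT a b) (𝓝[>] (0:ℝ)) (𝓝 π) := by
  have hggz : Tendsto (gg a) (𝓝[>] (0:ℝ)) (𝓝[>] (0:ℝ)) := by
    rw [tendsto_nhdsWithin_iff]
    constructor
    · have := ((continuous_gg (a := a)).tendsto 0).mono_left (nhdsWithin_le_nhds (s := Ioi (0:ℝ)))
      rwa [gg_at_zero ha] at this
    · filter_upwards [self_mem_nhdsWithin] with x hx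
      exact gg_pos ha hx
  have hinv : Tendsto (fun x => (gg a x)⁻¹) (𝓝[>] (0:ℝ)) atTop :=
    tendsto_inv_nhdsGT_zero.comp hggz
  have hβ : 0 < Real.sqrt (a+b) := Real.sqrt_pos.2 (by linarith)
  have hffn : Tendsto (ffn a) (𝓝[>] (0:ℝ)) (𝓝 (Real.sqrt a)) := by
    have := ((continuous_ffn (a := a)).tendsto 0).mono_left (nhdsWithin_le_nhds (s := Ioi (0:ℝ)))
    rwa [ffn_at_zero ha] at this
  have h1 : Tendsto (fun x => (ffn a x + Real.sqrt (a+b)) / gg a x) (𝓝[>] (0:ℝ)) atTop := by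
    have hnum : Tendsto (fun x => ffn a x + Real.sqrt (a+b)) (𝓝[>] (0:ℝ)) (𝓝 (Real.sqrt a + Real.sqrt (a+b))) :=
      hffn.add tendsto_const_nhds
    have := Tendsto.pos_mul_atTop (by positivity) hnum hinv
    exact this.congr (fun x => (div_eq_mul_inv _ _).symm)
  have h2 : Tendsto (fun x => (ffn a x - Real.sqrt (a+b)) / gg a x) (𝓝[>] (0:ℝ)) atBot := by
    have hnum : Tendsto (fun x => ffn a x - Real.sqrt (a+b)) (𝓝[>] (0:ℝ)) (𝓝 (Real.sqrt a - Real.sqrt (a+b))) :=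
      hffn.sub tendsto_const_nhds
    have hneg : Real.sqrt a - Real.sqrt (a+b) < 0 := by
      have := Real.sqrt_lt_sqrt ha (show a < a + b by linarith)
      linarith
    have := Tendsto.neg_mul_atTop hneg hnum hinv
    exact this.congr (fun x => (div_eq_mul_inv _ _).symm)
  have ha1 : Tendsto (fun x => arctan ((ffn a x + Real.sqrt (a+b)) / gg a x)) (𝓝[>] (0:ℝ)) (𝓝 (π/2)) :=
    ((tendsto_arctan_atTop.mono_right nhdsWithin_le_nhds).comp h1)
  have ha2 : Tendsto (fun x => arctan ((ffn a x - Real.sqrt (a+b)) / gg a x)) (𝓝[>] (0:ℝ)) (𝓝 (-(π/2))) :=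
    ((tendsto_arctan_atBot.mono_right nhdsWithin_le_nhds).comp h2)
  have := ha1.sub ha2
  rw [show π/2 - -(π/2) = π by ring] at this
  exact this

include ha hb in
lemma tendsto_GG_zero : Tendsto (GG a b) (𝓝[>] (0:ℝ)) (𝓝 0) := by
  have hggz : Tendsto (gg a) (𝓝 (0:ℝ)) (𝓝 0) := by
    have := (continuous_gg (a := a)).tendsto 0
    rwa [gg_at_zero ha] at this
  have hcont : ContinuousAt (GG a b) 0 → Tendsto (GG a b) (𝓝[>] (0:ℝ)) (𝓝 (GG a b 0)) :=
    fun h => h.tendsto.mono_left nhdsWithin_le_nhds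
  rcases le_or_gt b a with hba | hba
  · have hGG : GG a b = fun x => Real.sqrt (a-b) * arctan (2 * Real.sqrt (a-b) * gg a x / (2*(gg a x)^2 + b)) := by
      funext y; simp only [GG, if_pos hba]
    rw [hGG]
    set α := Real.sqrt (a-b)
    have harg : Tendsto (fun x => 2 * α * gg a x / (2*(gg a x)^2 + b)) (𝓝 (0:ℝ)) (𝓝 0) := by
      have hnum : Tendsto (fun x => 2 * α * gg a x) (𝓝 (0:ℝ)) (𝓝 0) := by
        simpa using hggz.const_mul (2*α)
      have hden : Tendsto (fun x => 2*(gg a x)^2 + b) (𝓝 (0:ℝ)) (𝓝 b) := by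
        have := (hggz.pow 2).const_mul 2
        have h2 := this.add_const b
        simpa using h2
      have := hnum.div hden hb.ne'
      rwa [zero_div] at this
    have := ((Real.continuous_arctan.tendsto 0).comp harg).const_mul α
    simp only [Real.arctan_zero, mul_zero] at this
    exact this.mono_left nhdsWithin_le_nhds
  · have hGG : GG a b = fun x => (Real.sqrt (b-a)/2) * (Real.log (2*(gg a x)^2 + b - 2*Real.sqrt (b-a)*gg a x)
        - Real.log (2*(gg a x)^2 + b + 2*Real.sqrt (b-a)*gg a x)) := by
      funext y; simp only [GG, if_neg (not_le.2 hba)]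
    rw [hGG]
    set α := Real.sqrt (b-a)
    have harg1 : Tendsto (fun x => 2*(gg a x)^2 + b - 2*α*gg a x) (𝓝 (0:ℝ)) (𝓝 b) := by
      have h1 := ((hggz.pow 2).const_mul 2).add_const b
      have h2 := hggz.const_mul (2*α)
      have := h1.sub h2
      simpa using this
    have harg2 : Tendsto (fun x => 2*(gg a x)^2 + b + 2*α*gg a x) (𝓝 (0:ℝ)) (𝓝 b) := by
      have h1 := ((hggz.pow 2).const_mul 2).add_const b
      have h2 := hggz.const_mul (2*α)
      have := h1.add h2
      simpa using this
    have hl1 := (Real.continuousAt_log hb.ne').tendsto.comp harg1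
    have hl2 := (Real.continuousAt_log hb.ne').tendsto.comp harg2
    have := (hl1.sub hl2).const_mul (α/2)
    simp only [sub_self, mul_zero] at this
    exact this.mono_left nhdsWithin_le_nhds

end lims

theorem stmt17 (a b : ℝ) (ha : 0 ≤ a) (hb : 0 < b) :
    ∫ x in Set.Ioi (0:ℝ), Real.sqrt (Real.sqrt (x^2 + a^2) + a) / (x^2 + b^2)
      = π / b * Real.sqrt ((a + b) / 2) := by
  have hβ : (Real.sqrt (a+b))^2 = a + b := Real.sq_sqrt (by linarith)
  have hbne : b ≠ 0 := hb.ne'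
  -- the key application
  have hderiv : ∀ x ∈ Ioi (0:ℝ), HasDerivAt (FFa a b)
      (Real.sqrt (Real.sqrt (x^2 + a^2) + a) / (x^2 + b^2)) x := by
    intro x hx
    have hx0 : (0:ℝ) < x := hx
    have hG := hasDerivAt_GG ha hb hx0
    have hT := hasDerivAt_TT ha hb hx0
    have hD := (hG.sub (hT.const_mul (Real.sqrt (a+b)))).const_mul (Real.sqrt 2/(2*b))
    have hEq : FFa a b =ᶠ[𝓝 x] fun y => (Real.sqrt 2/(2*b)) * (GG a b y - Real.sqrt (a+b) * TT a b y) := by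
      filter_upwards [eventually_ne_nhds hx0.ne'] with y hy
      simp only [FFa, if_neg hy]
    have hD2 := hD.congr_of_eventuallyEq hEq
    refine hD2.congr_deriv ?_
    -- algebraic identity
    have hR := rr_pos ha hx0
    have hF := ffn_pos ha hx0
    have hs2 : Real.sqrt (rr a x + a) = Real.sqrt 2 * ffn a x := by
      rw [ffn, ← Real.sqrt_mul (by norm_num : (0:ℝ) ≤ 2)]
      congr 1
      ring
    have hxa : Real.sqrt (x^2+a^2) = rr a x := rfl
    rw [hxa, hs2]
    set β := Real.sqrt (a+b)
    set R := rr a x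
    set F := ffn a x
    have hRne : R ≠ 0 := hR.ne'
    have hxb : x^2 + b^2 ≠ 0 := by positivity
    have hfact : (Real.sqrt 2/(2*b)) * ((a-b)*F*(a+b-R)/(R*(x^2+b^2)) - β*(β*F*(a-b-R)/(R*(x^2+b^2))))
        = (Real.sqrt 2/(2*b)) * (F*((a-b)*(a+b-R) - β^2*(a-b-R))/(R*(x^2+b^2))) := by
      ring
    rw [hfact, hβ]
    field_simp
    ring
  have hpos : ∀ x ∈ Ioi (0:ℝ), 0 ≤ Real.sqrt (Real.sqrt (x^2 + a^2) + a) / (x^2 + b^2) := by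
    intro x _
    positivity
  have hcont : ContinuousWithinAt (FFa a b) (Ici (0:ℝ)) 0 := by
    have hIci : Ici (0:ℝ) = insert 0 (Ioi 0) := by
      rw [Set.Ioi_insert]
    rw [ContinuousWithinAt, hIci, nhdsWithin_insert]
    rw [tendsto_sup]
    constructor
    · exact tendsto_pure_nhds _ _
    · have hEq : (fun y => (Real.sqrt 2/(2*b)) * (GG a b y - Real.sqrt (a+b) * TT a b y)) =ᶠ[𝓝[>] (0:ℝ)] FFa a b := by
        filter_upwards [self_mem_nhdsWithin] with y hy
        simp only [FFa, if_neg (show (0:ℝ) < y from hy).ne']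
      have hT := tendsto_TT_zero ha hb
      have hG := tendsto_GG_zero ha hb
      have hlim := (hG.sub (hT.const_mul (Real.sqrt (a+b)))).const_mul (Real.sqrt 2/(2*b))
      have h0 : FFa a b 0 = (Real.sqrt 2/(2*b)) * (0 - Real.sqrt (a+b) * π) := by
        simp only [FFa, if_true, eq_self_iff_true]
        norm_num
        ring
      rw [h0]
      exact hlim.congr' hEq
  have htop : Tendsto (FFa a b) atTop (𝓝 0) := by
    have hEq : (fun y => (Real.sqrt 2/(2*b)) * (GG a b y - Real.sqrt (a+b) * TT a b y)) =ᶠ[atTop] FFa a b := by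
      filter_upwards [eventually_gt_atTop (0:ℝ)] with y hy
      simp only [FFa, if_neg (ne_of_gt hy)]
    have hlim := ((tendsto_GG_atTop ha hb).sub ((tendsto_TT_atTop (b := b) ha).const_mul (Real.sqrt (a+b)))).const_mul (Real.sqrt 2/(2*b))
    rw [show (Real.sqrt 2/(2*b)) * ((0:ℝ) - Real.sqrt (a+b)*0) = 0 from by ring] at hlim
    exact hlim.congr' hEq
  have key := integral_Ioi_of_hasDerivAt_of_nonneg hcont hderiv hpos htop
  rw [key]
  have h0 : FFa a b 0 = -(Real.sqrt 2 * Real.sqrt (a+b) * π / (2*b)) := by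
    simp [FFa]
  rw [h0]
  have hsd : Real.sqrt ((a+b)/2) = Real.sqrt (a+b) / Real.sqrt 2 := by
    rw [Real.sqrt_div (by linarith)]
  rw [hsd]
  have h2 : Real.sqrt 2 * Real.sqrt 2 = 2 := Real.mul_self_sqrt (by norm_num)
  have h2ne : Real.sqrt 2 ≠ 0 := by positivity
  field_simp
  linear_combination (π * Real.sqrt (a+b)) * h2
end
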